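/- arXiv:2311.16558 — 14 statements merged into one kernel-verified Lean document; each statement's English description precedes it below -/
import Mathlib

section
/- Let κ be an uncountable cardinal and let {X_α : α < κ} be a family of nonempty topological spaces. If there is an uncountable set D ⊆ κ such that X_α is not sequentially compact for every α ∈ D, then the product space ∏_{α<κ} X_α (with the product topology) is SHD. -/
open Filter Topology Set

/-- `x : ℕ → X` has no convergent subsequence. -/
def NoConvSubseq {X : Type*} [TopologicalSpace X] (x : ℕ → X) : Prop :=
  ∀ φ : ℕ → ℕ, StrictMono φ → ∀ y : X, ¬ Filter.Tendsto (x ∘ φ) Filter.atTop (nhds y)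

/-- Selectively highly divergent. -/
def SHD (X : Type*) [TopologicalSpace X] : Prop :=
  ∀ U : ℕ → Set X, (∀ n, IsOpen (U n)) → (∀ n, (U n).Nonempty) →
    ∃ x : ℕ → X, (∀ n, x n ∈ U n) ∧ NoConvSubseq x

/-- Weakly selectively highly divergent. -/
def WSHD (X : Type*) [TopologicalSpace X] : Prop :=
  ∀ U : ℕ → Set X, (∀ n, IsOpen (U n)) → (∀ n, (U n).Nonempty) →
    ∃ A : Set ℕ, A.Infinite ∧ ∃ x : ℕ → X, (∀ n ∈ A, x n ∈ U n) ∧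
      ∀ φ : ℕ → ℕ, StrictMono φ → (∀ n, φ n ∈ A) →
        ∀ y : X, ¬ Filter.Tendsto (x ∘ φ) Filter.atTop (nhds y)

/-- A sequence of nonempty open sets converges to a point. -/
def OpenSeqTendsto {X : Type*} [TopologicalSpace X] (U : ℕ → Set X) (x : X) : Prop :=
  ∀ V : Set X, IsOpen V → x ∈ V → ∃ m : ℕ, ∀ n ≥ m, U n ⊆ V

/-- Openly highly divergent: no sequence of nonempty open sets converges to a point. -/
def OHD (X : Type*) [TopologicalSpace X] : Prop :=
  ¬ ∃ (U : ℕ → Set X) (x : X),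
      (∀ n, IsOpen (U n)) ∧ (∀ n, (U n).Nonempty) ∧ OpenSeqTendsto U x

/-- `x` has a countable local (neighbourhood) base. -/
def HasCountableLocalBase {X : Type*} [TopologicalSpace X] (x : X) : Prop :=
  ∃ B : Set (Set X), B.Countable ∧ (∀ V ∈ B, IsOpen V ∧ x ∈ V) ∧
    ∀ U : Set X, IsOpen U → x ∈ U → ∃ V ∈ B, V ⊆ U

/-- `x` has a countable local π-base. -/
def HasCountableLocalPiBase {X : Type*} [TopologicalSpace X] (x : X) : Prop :=
  ∃ B : Set (Set X), B.Countable ∧ (∀ V ∈ B, IsOpen V ∧ V.Nonempty) ∧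
    ∀ U : Set X, IsOpen U → x ∈ U → ∃ V ∈ B, V ⊆ U

/-- UC: every point has uncountable character. -/
def UC (X : Type*) [TopologicalSpace X] : Prop := ∀ x : X, ¬ HasCountableLocalBase x

/-- π-UC: every point has uncountable π-character. -/
def PiUC (X : Type*) [TopologicalSpace X] : Prop := ∀ x : X, ¬ HasCountableLocalPiBase x

/-- Sequentially discrete: every convergent sequence is eventually constant. -/
def SD (X : Type*) [TopologicalSpace X] : Prop :=
  ∀ (x : ℕ → X) (y : X), Filter.Tendsto x Filter.atTop (nhds y) →
    ∃ m : ℕ, ∀ n ≥ m, x n = x m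

/-- The Pixley–Roy hyperspace: nonempty finite subsets of `X`. -/
def PR (X : Type*) : Type _ := {F : Set X // F.Finite ∧ F.Nonempty}

/-- The basic sets `[F, U]` of the Pixley–Roy topology. -/
def PRBasic {X : Type*} (F U : Set X) : Set (PR X) :=
  {G : PR X | F ⊆ G.1 ∧ G.1 ⊆ U}

instance PR.instTopologicalSpace {X : Type*} [TopologicalSpace X] :
    TopologicalSpace (PR X) :=
  TopologicalSpace.generateFrom
    {S | ∃ (F : PR X) (U : Set X), IsOpen U ∧ S = PRBasic F.1 U}

/-- P-space: countable intersections of open sets are open. -/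
def PSpace (X : Type*) [TopologicalSpace X] : Prop :=
  ∀ U : ℕ → Set X, (∀ n, IsOpen (U n)) → IsOpen (⋂ n, U n)

/-- `Σ(Y, p, κ)`: points of `Y^κ` differing from the constant `p` on countably many coordinates. -/
def SigmaProd (Y : Type*) (p : Y) (κ : Type*) : Set (κ → Y) :=
  {x | {α : κ | x α ≠ p}.Countable}

/-- `σ(Y, p, κ)`: points of `Y^κ` differing from the constant `p` on finitely many coordinates. -/
def SmallSigmaProd (Y : Type*) (p : Y) (κ : Type*) : Set (κ → Y) :=
  {x | {α : κ | x α ≠ p}.Finite}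


/-! Each of countably many nonempty open sets of the product contains a basic open set around
one of its points, and these basic sets restrict only countably many coordinates. Since
uncountably many factors are not sequentially compact, one such factor `X α` is left free;
replacing the `α`-coordinate of the chosen points by a sequence of `X α` without convergent
subsequence keeps them in the open sets, and the continuous projection to `X α` rules out any
convergent subsequence in the product. -/

theorem NoConvSubseq.of_comp {X Y : Type*} [TopologicalSpace X] [TopologicalSpace Y]
    {f : X → Y} (hf : Continuous f) {x : ℕ → X} (h : NoConvSubseq (f ∘ x)) :
    NoConvSubseq x :=
  fun φ hφ y hy => h φ hφ (f y) ((hf.tendsto y).comp hy)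

theorem exists_noConvSubseq_of_not_seqCompactSpace {X : Type*} [TopologicalSpace X]
    (h : ¬ SeqCompactSpace X) : ∃ x : ℕ → X, NoConvSubseq x := by
  by_contra! hx
  refine h ⟨fun x _ => ?_⟩
  simp only [NoConvSubseq, not_forall, not_not] at hx
  obtain ⟨φ, hφ, y, hy⟩ := hx x
  exact ⟨y, mem_univ y, φ, hφ, hy⟩

theorem IsOpen.exists_finset_forall_mem_of_eq {ι : Type*} {X : ι → Type*}
    [∀ α, TopologicalSpace (X α)] {U : Set (∀ α, X α)} (hU : IsOpen U) {p : ∀ α, X α}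
    (hp : p ∈ U) : ∃ I : Finset ι, ∀ x, (∀ i ∈ I, x i = p i) → x ∈ U := by
  obtain ⟨I, u, hu, hIU⟩ := isOpen_pi_iff.mp hU p hp
  exact ⟨I, fun x hx => hIU fun i hi => hx i hi ▸ (hu i hi).2⟩

theorem shd_pi_of_forall_countable {ι : Type*} {X : ι → Type*} [∀ α, TopologicalSpace (X α)]
    (h : ∀ S : Set ι, S.Countable → ∃ α ∉ S, ¬ SeqCompactSpace (X α)) :
    SHD (∀ α, X α) := by
  classical
  intro U hUo hUne
  choose p hp using hUne
  choose I hI using fun n => (hUo n).exists_finset_forall_mem_of_eq (hp n)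
  obtain ⟨α, hαI, hα⟩ :=
    h (⋃ n, (I n : Set ι)) (countable_iUnion fun n => (I n).countable_toSet)
  obtain ⟨a, ha⟩ := exists_noConvSubseq_of_not_seqCompactSpace hα
  refine ⟨fun n => Function.update (p n) α (a n), fun n => hI n _ fun i hi => ?_, ?_⟩
  · have hiα : i ≠ α := by
      rintro rfl
      exact hαI (mem_iUnion.mpr ⟨n, hi⟩)
    exact Function.update_of_ne hiα _ _
  · refine NoConvSubseq.of_comp (continuous_apply α) ?_
    simpa only [Function.comp_def, Function.update_self] using ha

theorem statement0_general {ι : Type*} (X : ι → Type*)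
    [∀ α, TopologicalSpace (X α)]
    (D : Set ι) (hD : ¬ D.Countable)
    (h : ∀ α ∈ D, ¬ SeqCompactSpace (X α)) :
    SHD (∀ α, X α) :=
  shd_pi_of_forall_countable fun S hS => by
    obtain ⟨α, hαD, hαS⟩ := not_subset.mp fun hDS => hD (hS.mono hDS)
    exact ⟨α, hαS, h α hαD⟩

theorem statement0 {ι : Type*} [Uncountable ι] (X : ι → Type*)
    [∀ α, TopologicalSpace (X α)] [∀ α, Nonempty (X α)]
    (D : Set ι) (hD : ¬ D.Countable)
    (h : ∀ α ∈ D, ¬ SeqCompactSpace (X α)) :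
    SHD (∀ α, X α) :=
  statement0_general X D hD h
end

section
/- Let κ be an infinite cardinal and let αD(κ) denote the one-point compactification of the discrete space of cardinality κ. Then the space X_κ := (αD(κ))^{2^κ} (with the product topology) is Hausdorff, compact, zero-dimensional and SHD, its density is κ, and its weight is 2^κ. -/
open Filter Topology Set

universe u

/-- The density of a space: least cardinality of a dense subset. -/
noncomputable def densityCard (X : Type u) [TopologicalSpace X] : Cardinal.{u} :=
  sInf {c : Cardinal.{u} | ∃ s : Set X, Dense s ∧ Cardinal.mk s = c}

/-- The weight of a space: least cardinality of a base for the topology. -/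
noncomputable def weightCard (X : Type u) [TopologicalSpace X] : Cardinal.{u} :=
  sInf {c : Cardinal.{u} | ∃ B : Set (Set X),
    TopologicalSpace.IsTopologicalBasis B ∧ Cardinal.mk B = c}


section Aux
set_option linter.unusedSectionVars false
set_option maxHeartbeats 1000000
variable {K : Type u} [TopologicalSpace K] [DiscreteTopology K] [Infinite K]

lemma clopen_single (k : K) : IsClopen {((k : K) : OnePoint K)} := by
  have h : ({((k : K) : OnePoint K)} : Set (OnePoint K)) = (↑) '' {k} := by simp
  rw [h]
  exact ⟨OnePoint.isClosed_image_coe.2 ⟨isClosed_singleton, isCompact_singleton⟩,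
    OnePoint.isOpen_image_coe.2 (isOpen_discrete _)⟩

instance : TotallyDisconnectedSpace (OnePoint K) := by
  refine (totallyDisconnectedSpace_iff _).2 (@TotallySeparatedSpace.isTotallySeparated_univ _ _
    (totallySeparatedSpace_iff_exists_isClopen.2 ?_)).isTotallyDisconnected
  intro x y hxy
  cases x with
  | infty =>
    cases y with
    | infty => exact absurd rfl hxy
    | coe k =>
      refine ⟨{((k : K) : OnePoint K)}ᶜ, (clopen_single k).compl, ?_, by simp⟩
      simp only [mem_compl_iff, mem_singleton_iff]
      exact hxy
  | coe k =>
    exact ⟨{((k : K) : OnePoint K)}, clopen_single k, rfl,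
      fun h => hxy (mem_singleton_iff.1 h).symm⟩

lemma shd_prod : SHD (Set K → OnePoint K) := by
  classical
  intro U hUo hUne
  choose p hp using hUne
  have hbasis := isTopologicalBasis_pi
    (fun _ : Set K => @TopologicalSpace.isTopologicalBasis_opens (OnePoint K) _)
  have h1 : ∀ n, ∃ (V : Set K → Set (OnePoint K)) (F : Finset (Set K)),
      p n ∈ (F : Set (Set K)).pi V ∧ (F : Set (Set K)).pi V ⊆ U n := by
    intro n
    obtain ⟨S, hS, hpS, hSU⟩ := hbasis.exists_subset_of_mem_open (hp n) (hUo n)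
    obtain ⟨V, F, _, rfl⟩ := hS
    exact ⟨V, F, hpS, hSU⟩
  choose V F hpV hVU using h1
  set S : Set (Set K) := ⋃ n, (F n : Set (Set K)) with hSdef
  have hScount : S.Countable := countable_iUnion fun n => (F n).countable_toSet
  have hlt : Cardinal.mk ↥S < Cardinal.mk (Set K) := by
    calc Cardinal.mk ↥S ≤ Cardinal.aleph0 := by
          rw [Cardinal.mk_le_aleph0_iff]; exact hScount.to_subtype
      _ < 2 ^ Cardinal.aleph0 := Cardinal.cantor _
      _ ≤ 2 ^ Cardinal.mk K :=
          Cardinal.power_le_power_left two_ne_zero (Cardinal.aleph0_le_mk K)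
      _ = Cardinal.mk (Set K) := (Cardinal.mk_set).symm
  have hcompl : Cardinal.mk (↥Sᶜ) = Cardinal.mk (Set K) := Cardinal.mk_compl_of_infinite S hlt
  have hcard : Nonempty (Set ℕ ↪ ↥Sᶜ) := by
    rw [← Cardinal.lift_mk_le']
    simp only [Cardinal.mk_set, Cardinal.mk_nat, Cardinal.lift_power, Cardinal.lift_aleph0,
      Cardinal.lift_ofNat, Cardinal.lift_id', Cardinal.lift_id]
    rw [hcompl, Cardinal.mk_set]
    exact Cardinal.power_le_power_left two_ne_zero (Cardinal.aleph0_le_mk K)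
  obtain ⟨e⟩ := hcard
  set β : Set ℕ → Set K := fun A => (e A : Set K) with hβ
  have hβinj : Function.Injective β := fun a b h => e.injective (Subtype.val_injective h)
  have hβS : ∀ A, β A ∉ S := fun A => (e A).2
  obtain ⟨d0, d1, hd⟩ := exists_pair_ne K
  set x : ℕ → Set K → OnePoint K := fun n A =>
    if h : ∃ B : Set ℕ, β B = A then
      (if n ∈ Classical.choose h then (d0 : OnePoint K) else (d1 : OnePoint K))
    else p n A with hxdef
  refine ⟨x, fun n => hVU n ?_, ?_⟩
  · intro A hA
    have hAS : A ∈ S := mem_iUnion.2 ⟨n, hA⟩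
    have hnr : ¬ ∃ B : Set ℕ, β B = A := by
      rintro ⟨B, rfl⟩; exact hβS B hAS
    show x n A ∈ V n A
    rw [hxdef]; simp only [dif_neg hnr]
    exact hpV n A hA
  · intro φ hφ y hten
    set A : Set ℕ := φ '' {m | Even m} with hA
    set c : Set K := β A with hc
    have hev : Tendsto (fun k => (x (φ k)) c) atTop (nhds (y c)) :=
      ((continuous_apply c).tendsto y).comp hten
    have hex : ∃ B : Set ℕ, β B = c := ⟨A, rfl⟩
    have hch : Classical.choose hex = A := hβinj (Classical.choose_spec hex)
    have hval : ∀ k, x (φ k) c = if φ k ∈ A then (d0 : OnePoint K) else (d1 : OnePoint K) := by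
      intro k
      rw [hxdef]; simp only [dif_pos hex, hch]
    have hmem : ∀ k, (φ k ∈ A ↔ Even k) := by
      intro k
      constructor
      · rintro ⟨m, hm, hmk⟩; exact (hφ.injective hmk) ▸ hm
      · intro h; exact ⟨k, h, rfl⟩
    have h2m : Tendsto (fun m : ℕ => (2 * m)) atTop atTop :=
      StrictMono.tendsto_atTop (fun a b h => by omega)
    have h2m1 : Tendsto (fun m : ℕ => (2 * m + 1)) atTop atTop :=
      StrictMono.tendsto_atTop (fun a b h => by omega)
    have h0 : Tendsto (fun m : ℕ => x (φ (2 * m)) c) atTop (nhds (y c)) := hev.comp h2m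
    have h1' : Tendsto (fun m : ℕ => x (φ (2 * m + 1)) c) atTop (nhds (y c)) := hev.comp h2m1
    have e0 : ∀ m : ℕ, x (φ (2 * m)) c = (d0 : OnePoint K) := fun m => by
      rw [hval, if_pos ((hmem _).2 ⟨m, by ring⟩)]
    have e1 : ∀ m : ℕ, x (φ (2 * m + 1)) c = (d1 : OnePoint K) := fun m => by
      rw [hval, if_neg]
      intro h
      have h2 := (hmem _).1 h
      simp [Nat.even_add_one, Nat.even_mul] at h2
    have E0 : y c = (d0 : OnePoint K) := by
      simp only [e0] at h0
      exact tendsto_nhds_unique h0 tendsto_const_nhds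
    have E1 : y c = (d1 : OnePoint K) := by
      simp only [e1] at h1'
      exact tendsto_nhds_unique h1' tendsto_const_nhds
    exact hd (OnePoint.coe_injective (E0.symm.trans E1))

lemma dense_small : ∃ D : Set (Set K → OnePoint K), Dense D ∧
    Cardinal.mk ↥D ≤ Cardinal.mk K := by
  classical
  set tr : Finset K → Set K → Finset K := fun s A => s.filter (fun k => k ∈ A) with htr
  set mkf : (Σ s : Finset K, ({t : Finset K // t ⊆ s} → OnePoint K)) → (Set K → OnePoint K) :=
    fun g A => g.2 ⟨tr g.1 A, Finset.filter_subset _ _⟩ with hmkf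
  refine ⟨Set.range mkf, ?_, ?_⟩
  · rw [dense_iff_inter_open]
    intro Uo hUo hUne
    obtain ⟨q, hq⟩ := hUne
    have hbasis := isTopologicalBasis_pi
      (fun _ : Set K => @TopologicalSpace.isTopologicalBasis_opens (OnePoint K) _)
    obtain ⟨S, hS, hqS, hSU⟩ := hbasis.exists_subset_of_mem_open hq hUo
    obtain ⟨V, F, hVo, rfl⟩ := hS
    set w : Set K → Set K → K := fun A B =>
      if h : ∃ k, (k ∈ A ∧ k ∉ B) ∨ (k ∈ B ∧ k ∉ A) then h.choose else Classical.arbitrary K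
      with hw
    set s : Finset K := F.sup (fun A => F.sup (fun B => {w A B})) with hs
    have key : ∀ A ∈ F, ∀ B ∈ F, A ≠ B → tr s A ≠ tr s B := by
      intro A hA B hB hne heq
      have hex : ∃ k, (k ∈ A ∧ k ∉ B) ∨ (k ∈ B ∧ k ∉ A) := by
        by_contra hcon
        push_neg at hcon
        apply hne
        ext k
        have := hcon k
        tauto
      have hwv : w A B = hex.choose := dif_pos hex
      have hk0 := hex.choose_spec
      have hk0s : hex.choose ∈ s := by
        rw [hs]
        rw [Finset.mem_sup]
        exact ⟨A, hA, Finset.mem_sup.2 ⟨B, hB, by rw [Finset.mem_singleton, hwv]⟩⟩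
      rcases hk0 with ⟨h1, h2⟩ | ⟨h1, h2⟩
      · have hm : hex.choose ∈ tr s A := Finset.mem_filter.2 ⟨hk0s, h1⟩
        rw [heq] at hm
        exact h2 (Finset.mem_filter.1 hm).2
      · have hm : hex.choose ∈ tr s B := Finset.mem_filter.2 ⟨hk0s, h1⟩
        rw [← heq] at hm
        exact h2 (Finset.mem_filter.1 hm).2
    set g : {t : Finset K // t ⊆ s} → OnePoint K := fun t =>
      if h : ∃ A, A ∈ F ∧ tr s A = t.1 then q h.choose else OnePoint.infty with hg
    set f : Set K → OnePoint K := mkf ⟨s, g⟩ with hf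
    have hfV : ∀ A ∈ (F : Set (Set K)), f A ∈ V A := by
      intro A hA
      have hex2 : ∃ A', A' ∈ F ∧ tr s A' = tr s A := ⟨A, hA, rfl⟩
      have hval : f A = q hex2.choose := by
        rw [hf, hmkf]
        simp only [hg, dif_pos hex2]
      have hspec := hex2.choose_spec
      have : hex2.choose = A := by
        by_contra hne
        exact key _ hspec.1 A hA hne hspec.2
      rw [hval, this]
      exact hqS A hA
    exact ⟨f, hSU hfV, ⟨⟨s, g⟩, rfl⟩⟩
  · refine le_trans Cardinal.mk_range_le ?_
    rw [Cardinal.mk_sigma]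
    have hone : Cardinal.mk (OnePoint K) = Cardinal.mk K := by
      have h1 : Cardinal.mk (OnePoint K) = Cardinal.mk K + 1 := Cardinal.mk_option
      rw [h1, Cardinal.add_one_eq (Cardinal.aleph0_le_mk K)]
    have hbound : ∀ s : Finset K,
        Cardinal.mk ({t : Finset K // t ⊆ s} → OnePoint K) ≤ Cardinal.mk K := by
      intro s
      haveI : Fintype {t : Finset K // t ⊆ s} :=
        Fintype.subtype s.powerset (fun t => Finset.mem_powerset)
      rw [← Cardinal.power_def, Cardinal.mk_fintype ({t : Finset K // t ⊆ s}), Cardinal.power_natCast, hone]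
      exact Cardinal.power_nat_le (Cardinal.aleph0_le_mk K)
    calc (Cardinal.sum fun s : Finset K => Cardinal.mk ({t : Finset K // t ⊆ s} → OnePoint K))
        ≤ Cardinal.sum fun _ : Finset K => Cardinal.mk K := Cardinal.sum_le_sum _ _ hbound
      _ = Cardinal.mk (Finset K) * Cardinal.mk K := Cardinal.sum_const' _ _
      _ = Cardinal.mk K * Cardinal.mk K := by rw [Cardinal.mk_finset_of_infinite]
      _ = Cardinal.mk K := Cardinal.mul_eq_self (Cardinal.aleph0_le_mk K)

lemma hone' : Cardinal.mk (OnePoint K) = Cardinal.mk K := by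
  have h1 : Cardinal.mk (OnePoint K) = Cardinal.mk K + 1 := Cardinal.mk_option
  rw [h1, Cardinal.add_one_eq (Cardinal.aleph0_le_mk K)]

lemma dense_lower (s : Set (Set K → OnePoint K)) (hs : Dense s) :
    Cardinal.mk K ≤ Cardinal.mk ↥s := by
  classical
  have hpt : ∀ k : K, ∃ f ∈ s, f ∅ = (k : OnePoint K) := by
    intro k
    have hopen : IsOpen ((fun f : Set K → OnePoint K => f ∅) ⁻¹' {(k : OnePoint K)}) :=
      (continuous_apply (∅ : Set K)).isOpen_preimage _ (clopen_single k).2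
    have hne : ((fun f : Set K → OnePoint K => f ∅) ⁻¹' {(k : OnePoint K)}).Nonempty :=
      ⟨fun _ => (k : OnePoint K), rfl⟩
    obtain ⟨f, hf1, hf2⟩ := (dense_iff_inter_open.1 hs) _ hopen hne
    exact ⟨f, hf2, hf1⟩
  choose q hqs hqv using hpt
  have hinj : Function.Injective (fun k => (⟨q k, hqs k⟩ : s)) := by
    intro a b hab
    have h1 : q a = q b := congrArg Subtype.val hab
    have h2 : ((a : OnePoint K)) = (b : OnePoint K) := by
      rw [← hqv a, ← hqv b, h1]
    exact OnePoint.coe_injective h2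
  exact Cardinal.mk_le_of_injective hinj

lemma weight_lower (B : Set (Set (Set K → OnePoint K)))
    (hB : TopologicalSpace.IsTopologicalBasis B) :
    Cardinal.mk (Set K) ≤ Cardinal.mk ↥B := by
  classical
  obtain ⟨k0⟩ : Nonempty K := inferInstance
  set W : Set K → Set (Set K → OnePoint K) :=
    fun A => (fun f => f A) ⁻¹' {(k0 : OnePoint K)} with hW
  have hWo : ∀ A, IsOpen (W A) :=
    fun A => (continuous_apply A).isOpen_preimage _ (clopen_single k0).2
  set xp : Set K → (Set K → OnePoint K) :=
    fun A A' => if A' = A then (k0 : OnePoint K) else OnePoint.infty with hxp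
  have hx : ∀ A, xp A ∈ W A := by
    intro A
    simp [hW, hxp]
  have hchoice : ∀ A, ∃ b ∈ B, xp A ∈ b ∧ b ⊆ W A := fun A =>
    hB.exists_subset_of_mem_open (hx A) (hWo A)
  choose b hbB hxb hbW using hchoice
  have hinj : Function.Injective (fun A => (⟨b A, hbB A⟩ : B)) := by
    intro A A' h
    by_contra hne
    have hbb : b A = b A' := congrArg Subtype.val h
    have h1 : xp A ∈ W A' := hbW A' (hbb ▸ hxb A)
    have h2 : xp A A' = (k0 : OnePoint K) := h1
    rw [hxp] at h2
    simp only [if_neg (fun hc : A' = A => hne (by rw [hc]))] at h2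
    exact (OnePoint.infty_ne_coe k0) h2
  exact Cardinal.mk_le_of_injective hinj

lemma weight_upper : ∃ B : Set (Set (Set K → OnePoint K)),
    TopologicalSpace.IsTopologicalBasis B ∧ Cardinal.mk ↥B = 2 ^ Cardinal.mk K := by
  classical
  set B0 : Set (Set (Set K → OnePoint K)) :=
    { S | ∃ (U : Set K → Set (OnePoint K)) (F : Finset (Set K)),
        (∀ i ∈ F, U i ∈ {U : Set (OnePoint K) | IsOpen U}) ∧ S = (F : Set (Set K)).pi U }
    with hB0
  have hbasis : TopologicalSpace.IsTopologicalBasis B0 := isTopologicalBasis_pi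
    (fun _ : Set K => @TopologicalSpace.isTopologicalBasis_opens (OnePoint K) _)
  obtain ⟨k0⟩ : Nonempty K := inferInstance
  set W : Set K → Set (Set K → OnePoint K) :=
    fun A => (fun f => f A) ⁻¹' {(k0 : OnePoint K)} with hW
  set B : Set (Set (Set K → OnePoint K)) := B0 ∪ Set.range W with hB
  have hBbasis : TopologicalSpace.IsTopologicalBasis B := by
    apply TopologicalSpace.isTopologicalBasis_of_isOpen_of_nhds
    · rintro u (hu | ⟨A, rfl⟩)
      · exact hbasis.isOpen hu
      · exact (continuous_apply A).isOpen_preimage _ (clopen_single k0).2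
    · intro x u hxu hu
      obtain ⟨v, hv, hxv, hvu⟩ := hbasis.exists_subset_of_mem_open hxu hu
      exact ⟨v, Or.inl hv, hxv, hvu⟩
  have haleph : Cardinal.aleph0 ≤ 2 ^ Cardinal.mk K :=
    (Cardinal.aleph0_le_mk K).trans (Cardinal.cantor _).le
  have h0 : Cardinal.mk ↥B0 ≤ 2 ^ Cardinal.mk K := by
    set m : (Σ F : Finset (Set K), (↥F → Set (OnePoint K))) → Set (Set K → OnePoint K) :=
      fun g => (g.1 : Set (Set K)).pi
        (fun A => if h : A ∈ g.1 then g.2 ⟨A, h⟩ else Set.univ) with hm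
    have hsub : B0 ⊆ Set.range m := by
      rintro S ⟨U, F, hU, rfl⟩
      refine ⟨⟨F, fun a => U a.1⟩, ?_⟩
      refine Set.pi_congr rfl ?_
      intro i hi
      exact dif_pos (Finset.mem_coe.1 hi)
    have hsig : Cardinal.mk (Σ F : Finset (Set K), (↥F → Set (OnePoint K)))
        ≤ 2 ^ Cardinal.mk K := by
      rw [Cardinal.mk_sigma]
      have h2 : ∀ F : Finset (Set K),
          Cardinal.mk (↥F → Set (OnePoint K)) ≤ 2 ^ Cardinal.mk K := by
        intro F
        rw [← Cardinal.power_def, Cardinal.mk_fintype ↥F, Cardinal.power_natCast]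
        have hset : Cardinal.mk (Set (OnePoint K)) = 2 ^ Cardinal.mk K := by
          rw [Cardinal.mk_set, hone']
        rw [hset]
        exact Cardinal.power_nat_le haleph
      calc (Cardinal.sum fun F : Finset (Set K) => Cardinal.mk (↥F → Set (OnePoint K)))
          ≤ Cardinal.sum fun _ : Finset (Set K) => 2 ^ Cardinal.mk K :=
            Cardinal.sum_le_sum _ _ h2
        _ = Cardinal.mk (Finset (Set K)) * 2 ^ Cardinal.mk K := Cardinal.sum_const' _ _
        _ = Cardinal.mk (Set K) * 2 ^ Cardinal.mk K := by rw [Cardinal.mk_finset_of_infinite]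
        _ = 2 ^ Cardinal.mk K * 2 ^ Cardinal.mk K := by rw [Cardinal.mk_set]
        _ = 2 ^ Cardinal.mk K := Cardinal.mul_eq_self haleph
    exact (Cardinal.mk_le_mk_of_subset hsub).trans (Cardinal.mk_range_le.trans hsig)
  have h1 : Cardinal.mk ↥(Set.range W) ≤ 2 ^ Cardinal.mk K := by
    refine Cardinal.mk_range_le.trans ?_
    rw [Cardinal.mk_set]
  refine ⟨B, hBbasis, le_antisymm ?_ ?_⟩
  · refine (Cardinal.mk_union_le _ _).trans ?_
    calc Cardinal.mk ↥B0 + Cardinal.mk ↥(Set.range W)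
        ≤ 2 ^ Cardinal.mk K + 2 ^ Cardinal.mk K := add_le_add h0 h1
      _ = 2 ^ Cardinal.mk K := Cardinal.add_eq_self haleph
  · rw [← Cardinal.mk_set]
    exact weight_lower B hBbasis

lemma density_eq : densityCard (Set K → OnePoint K) = Cardinal.mk K := by
  classical
  obtain ⟨D, hD, hDle⟩ := dense_small (K := K)
  set cst : K → (Set K → OnePoint K) := fun k _ => (k : OnePoint K) with hcst
  set D' : Set (Set K → OnePoint K) := D ∪ Set.range cst with hD'
  have hD'dense : Dense D' := hD.mono subset_union_left
  have hD'card : Cardinal.mk ↥D' = Cardinal.mk K := by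
    apply le_antisymm
    · refine (Cardinal.mk_union_le _ _).trans ?_
      calc Cardinal.mk ↥D + Cardinal.mk ↥(Set.range cst)
          ≤ Cardinal.mk K + Cardinal.mk K := add_le_add hDle Cardinal.mk_range_le
        _ = Cardinal.mk K := Cardinal.add_eq_self (Cardinal.aleph0_le_mk K)
    · exact dense_lower D' hD'dense
  apply le_antisymm
  · exact csInf_le' ⟨D', hD'dense, hD'card⟩
  · refine le_csInf ⟨Cardinal.mk K, D', hD'dense, hD'card⟩ ?_
    rintro c ⟨t, ht, rfl⟩
    exact dense_lower t ht

lemma weight_eq : weightCard (Set K → OnePoint K) = 2 ^ Cardinal.mk K := by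
  obtain ⟨B, hB, hBcard⟩ := weight_upper (K := K)
  apply le_antisymm
  · exact csInf_le' ⟨B, hB, hBcard⟩
  · refine le_csInf ⟨Cardinal.mk ↥B, B, hB, rfl⟩ ?_
    rintro c ⟨B', hB', rfl⟩
    calc 2 ^ Cardinal.mk K = Cardinal.mk (Set K) := (Cardinal.mk_set).symm
      _ ≤ _ := weight_lower B' hB'

end Aux

theorem statement2 (K : Type u) [TopologicalSpace K] [DiscreteTopology K] [Infinite K] :
    T2Space (Set K → OnePoint K) ∧ CompactSpace (Set K → OnePoint K) ∧
    (∃ B : Set (Set (Set K → OnePoint K)),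
       TopologicalSpace.IsTopologicalBasis B ∧ ∀ V ∈ B, IsClopen V) ∧
    SHD (Set K → OnePoint K) ∧
    densityCard (Set K → OnePoint K) = Cardinal.mk K ∧
    weightCard (Set K → OnePoint K) = 2 ^ Cardinal.mk K := by
  exact ⟨inferInstance, inferInstance,
    ⟨{s | IsClopen s}, isTopologicalBasis_isClopen, fun _ hV => hV⟩,
    shd_prod, density_eq, weight_eq⟩
end

section
/- Let κ be an uncountable cardinal such that the Cantor cube D(2)^κ is not sequentially compact (this is equivalent to κ ≥ 𝔰, the splitting number), and let X be a dense subspace of D(2)^κ. Then the Stone–Čech compactification βX of X is SHD. -/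
open Filter Topology Set

theorem statement3 {κ : Type*} [Uncountable κ]
    (h : ¬ SeqCompactSpace (κ → Bool))
    (X : Set (κ → Bool)) (hX : Dense X) :
    SHD (StoneCech ↥X) := by
  classical
  haveI : FirstCountableTopology Bool :=
    ⟨fun x => by rw [nhds_discrete]; infer_instance⟩
  rw [seqCompactSpace_iff] at h
  unfold IsSeqCompact at h
  push_neg at h
  obtain ⟨z, -, hz⟩ := h
  intro U hUo hUne
  have hv : Continuous (Subtype.val : ↥X → κ → Bool) := continuous_subtype_val
  set e : StoneCech ↥X → κ → Bool := stoneCechExtend hv with he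
  have hec : Continuous e := continuous_stoneCechExtend hv
  have heu : ∀ p : ↥X, e (stoneCechUnit p) = ↑p := fun p =>
    congrFun (stoneCechExtend_extends hv) p
  -- Step A/B: basic boxes inside the open sets
  have key : ∀ n, ∃ (F : Finset κ) (b : κ → Bool),
      closure (stoneCechUnit '' (Subtype.val ⁻¹'
        ((F : Set κ).pi fun α => {b α})) : Set (StoneCech ↥X)) ⊆ U n := by
    intro n
    obtain ⟨p, hp⟩ := hUne n
    obtain ⟨s, ⟨hs_mem, hs_closed⟩, hsU⟩ :=
      (closed_nhds_basis p).mem_iff.mp ((hUo n).mem_nhds hp)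
    have hVopen : IsOpen (interior s) := isOpen_interior
    have hVne : (interior s).Nonempty := ⟨p, mem_interior_iff_mem_nhds.mpr hs_mem⟩
    obtain ⟨ξ, hξ⟩ := (denseRange_stoneCechUnit (α := ↥X)).exists_mem_open hVopen hVne
    obtain ⟨W, hWopen, hWeq⟩ :=
      isOpen_induced_iff.mp (hVopen.preimage (continuous_stoneCechUnit (α := ↥X)))
    have hξW : (ξ : κ → Bool) ∈ W := by
      have : ξ ∈ Subtype.val ⁻¹' W := by rw [hWeq]; exact hξ
      exact this
    obtain ⟨I, u, hu, hIu⟩ := isOpen_pi_iff.mp hWopen _ hξW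
    refine ⟨I, (ξ : κ → Bool), ?_⟩
    have hbox_sub : ((I : Set κ).pi fun α => {(ξ : κ → Bool) α}) ⊆ W := by
      refine subset_trans (Set.pi_mono fun α hα => ?_) hIu
      exact Set.singleton_subset_iff.mpr (hu α hα).2
    have h1 : stoneCechUnit '' (Subtype.val ⁻¹'
        ((I : Set κ).pi fun α => {(ξ : κ → Bool) α})) ⊆ interior s := by
      refine subset_trans (Set.image_mono ?_) (Set.image_preimage_subset _ _)
      rw [← hWeq]
      exact Set.preimage_mono hbox_sub
    refine subset_trans (closure_mono h1) (subset_trans ?_ hsU)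
    exact closure_minimal interior_subset hs_closed
  choose F b hFb using key
  -- Step C: the countable set of constrained coordinates
  set S : Set κ := ⋃ n, (F n : Set κ) with hSdef
  have hS : S.Countable := Set.countable_iUnion fun n => (F n).finite_toSet.countable
  haveI := hS.to_subtype
  -- Step D: stabilize z on the coordinates of S
  obtain ⟨a, ψ, hψ, ha⟩ :=
    SeqCompactSpace.tendsto_subseq (X := ↥S → Bool) (fun n (α : ↥S) => z n ↑α)
  -- Step E: target points
  set w : ℕ → κ → Bool := fun n α => if α ∈ F n then b n α else z (ψ n) α with hwdef
  have hw_box : ∀ n, w n ∈ (F n : Set κ).pi fun α => {b n α} := by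
    intro n
    refine Set.mem_pi.mpr fun α hα => ?_
    simp only [hwdef, Set.mem_singleton_iff]
    exact if_pos hα
  -- Step G: lift the target points into the closures
  have hx : ∀ n, ∃ x : StoneCech ↥X, x ∈ U n ∧ e x = w n := by
    intro n
    set A : Set (StoneCech ↥X) :=
      stoneCechUnit '' (Subtype.val ⁻¹' ((F n : Set κ).pi fun α => {b n α})) with hA
    have hBoxOpen : IsOpen ((F n : Set κ).pi fun α => {b n α}) :=
      isOpen_set_pi (F n).finite_toSet fun α _ => isOpen_discrete _
    have h1 : w n ∈ closure (((F n : Set κ).pi fun α => {b n α}) ∩ X) :=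
      hX.open_subset_closure_inter hBoxOpen (hw_box n)
    have h2 : e '' A = ((F n : Set κ).pi fun α => {b n α}) ∩ X := by
      rw [hA, Set.image_image]
      have : (fun p : ↥X => e (stoneCechUnit p)) = fun p : ↥X => (p : κ → Bool) := by
        funext p; exact heu p
      rw [this]
      rw [Set.image_preimage_eq_inter_range, Subtype.range_coe]
    have h3 : closure (((F n : Set κ).pi fun α => {b n α}) ∩ X) ⊆ e '' closure A := by
      refine closure_minimal ?_ ?_
      · rw [← h2]; exact Set.image_mono subset_closure
      · exact (isClosed_closure.isCompact.image hec).isClosed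
    obtain ⟨x, hxcl, hxe⟩ := h3 h1
    exact ⟨x, hFb n hxcl, hxe⟩
  choose x hxU hxe using hx
  refine ⟨x, hxU, ?_⟩
  -- Step H: no convergent subsequence
  intro φ hφ y hy
  have hwy : Tendsto (w ∘ φ) atTop (𝓝 (e y)) := by
    have h1 : Tendsto (e ∘ (x ∘ φ)) atTop (𝓝 (e y)) := (hec.tendsto y).comp hy
    refine h1.congr fun n => ?_
    exact hxe (φ n)
  set L : κ → Bool := fun α => if hα : α ∈ S then a ⟨α, hα⟩ else e y α with hLdef
  have hzL : Tendsto (z ∘ (ψ ∘ φ)) atTop (𝓝 L) := by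
    rw [tendsto_pi_nhds]
    intro α
    by_cases hα : α ∈ S
    · have h1 : Tendsto (fun n => z (ψ n) α) atTop (𝓝 (a ⟨α, hα⟩)) :=
        tendsto_pi_nhds.mp ha ⟨α, hα⟩
      have h2 : Tendsto (fun n => z (ψ (φ n)) α) atTop (𝓝 (a ⟨α, hα⟩)) :=
        h1.comp (hφ.tendsto_atTop)
      have : L α = a ⟨α, hα⟩ := dif_pos hα
      rw [this]
      exact h2
    · have h1 : Tendsto (fun n => w (φ n) α) atTop (𝓝 (e y α)) :=
        tendsto_pi_nhds.mp hwy α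
      have heq : ∀ n, w (φ n) α = z (ψ (φ n)) α := by
        intro n
        refine if_neg fun hmem => hα ?_
        exact Set.mem_iUnion.mpr ⟨φ n, hmem⟩
      have : L α = e y α := dif_neg hα
      rw [this]
      exact h1.congr heq
  exact hz L (Set.mem_univ L) (ψ ∘ φ) (hψ.comp hφ) hzL
end

section
/- Let X be a T1 topological space. Then X is sequentially discrete if and only if the Pixley–Roy hyperspace 𝔉[X] is sequentially discrete. -/
open Filter Topology Set

lemma PR_basic_isOpen {X : Type*} [TopologicalSpace X] (F : PR X) {U : Set X} (hU : IsOpen U) :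
    IsOpen (PRBasic F.1 U : Set (PR X)) :=
  TopologicalSpace.GenerateOpen.basic _ ⟨F, U, hU, rfl⟩

lemma PR_exists_basic {X : Type*} [TopologicalSpace X]
    {s : Set (PR X)} (hs : IsOpen s) {H : PR X} (hH : H ∈ s) :
    ∃ U, IsOpen U ∧ H.1 ⊆ U ∧ PRBasic H.1 U ⊆ s := by
  have hs' : TopologicalSpace.GenerateOpen
      {S | ∃ (F : PR X) (U : Set X), IsOpen U ∧ S = PRBasic F.1 U} s := hs
  clear hs
  revert hH
  induction hs' with
  | basic S hS =>
    intro hH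
    obtain ⟨F, U, hU, rfl⟩ := hS
    exact ⟨U, hU, hH.2, fun G hG => ⟨hH.1.trans hG.1, hG.2⟩⟩
  | univ =>
    intro _
    exact ⟨Set.univ, isOpen_univ, Set.subset_univ _, Set.subset_univ _⟩
  | inter S T hS hT ihS ihT =>
    intro hH
    obtain ⟨U₁, hU₁, hHU₁, h₁⟩ := ihS hH.1
    obtain ⟨U₂, hU₂, hHU₂, h₂⟩ := ihT hH.2
    exact ⟨U₁ ∩ U₂, hU₁.inter hU₂, Set.subset_inter hHU₁ hHU₂,
      fun G hG => ⟨h₁ ⟨hG.1, hG.2.trans Set.inter_subset_left⟩,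
        h₂ ⟨hG.1, hG.2.trans Set.inter_subset_right⟩⟩⟩
  | sUnion S hS ih =>
    intro hH
    obtain ⟨t, htS, hHt⟩ := hH
    obtain ⟨U, hU, hHU, hsub⟩ := ih t htS hHt
    exact ⟨U, hU, hHU, hsub.trans (Set.subset_sUnion_of_mem htS)⟩

lemma tendsto_PR_iff {X : Type*} [TopologicalSpace X] (G : ℕ → PR X) (H : PR X) :
    Tendsto G atTop (nhds H) ↔
      ∀ U : Set X, IsOpen U → H.1 ⊆ U →
        ∀ᶠ n in atTop, H.1 ⊆ (G n).1 ∧ (G n).1 ⊆ U := by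
  constructor
  · intro h U hU hHU
    have hmem : H ∈ PRBasic H.1 U := ⟨subset_rfl, hHU⟩
    have hopen : IsOpen (PRBasic H.1 U : Set (PR X)) := PR_basic_isOpen H hU
    exact h (hopen.mem_nhds hmem)
  · intro h
    rw [tendsto_nhds]
    intro s hs hHs
    obtain ⟨U, hU, hHU, hsub⟩ := PR_exists_basic hs hHs
    filter_upwards [h U hU hHU] with n hn
    exact hsub ⟨hn.1, hn.2⟩

lemma aux_extract {X : Type*} [TopologicalSpace X] (z : ℕ → X) (K : Finset X) :
    ∀ A : Set ℕ, A.Infinite →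
      (∀ U : Set X, IsOpen U → ↑K ⊆ U → {n ∈ A | z n ∉ U}.Finite) →
      ∃ h ∈ K, ∃ B ⊆ A, B.Infinite ∧
        ∀ V : Set X, IsOpen V → h ∈ V → {n ∈ B | z n ∉ V}.Finite := by
  classical
  induction K using Finset.induction_on with
  | empty =>
    intro A hA hU
    exact absurd (by simpa using hU ∅ isOpen_empty (by simp)) hA
  | @insert a s ha ih =>
    intro A hA hU
    by_cases hc : ∀ V : Set X, IsOpen V → a ∈ V → {n ∈ A | z n ∉ V}.Finite
    · exact ⟨a, Finset.mem_insert_self a s, A, subset_rfl, hA, hc⟩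
    · push_neg at hc
      obtain ⟨V, hV, haV, hinf⟩ := hc
      have hU' : ∀ U : Set X, IsOpen U → ↑s ⊆ U →
          {n ∈ {n ∈ A | z n ∉ V} | z n ∉ U}.Finite := by
        intro U hUo hsU
        have hfin := hU (U ∪ V) (hUo.union hV)
          (by rw [Finset.coe_insert]
              exact Set.insert_subset (Or.inr haV) (hsU.trans Set.subset_union_left))
        refine hfin.subset ?_
        rintro n ⟨⟨hnA, hnV⟩, hnU⟩
        exact ⟨hnA, fun h => h.elim hnU hnV⟩
      obtain ⟨h, hhs, B, hBA', hB, hconv⟩ := ih {n ∈ A | z n ∉ V} hinf hU'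
      exact ⟨h, Finset.mem_insert_of_mem hhs, B,
        hBA'.trans (Set.sep_subset _ _), hB, hconv⟩

theorem statement5 {X : Type*} [TopologicalSpace X] [T1Space X] :
    SD X ↔ SD (PR X) := by
  classical
  constructor
  · -- SD X → SD (PR X)
    intro hSD G H htend
    -- it suffices to show eventually G n = H
    by_contra hcon
    have hfreq : ∃ᶠ n in atTop, G n ≠ H := by
      by_contra hfr
      rw [Filter.not_frequently] at hfr
      simp only [not_not] at hfr
      obtain ⟨m, hm⟩ := eventually_atTop.1 hfr
      exact hcon ⟨m, fun n hn => (hm n hn).trans (hm m le_rfl).symm⟩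
    have hev : ∀ᶠ n in atTop, H.1 ⊆ (G n).1 :=
      ((tendsto_PR_iff G H).1 htend Set.univ isOpen_univ (Set.subset_univ _)).mono
        fun n hn => hn.1
    have hA₀ : {n | G n ≠ H ∧ H.1 ⊆ (G n).1}.Infinite := by
      rw [← Nat.frequently_atTop_iff_infinite]
      exact hfreq.and_eventually hev
    set A₀ : Set ℕ := {n | G n ≠ H ∧ H.1 ⊆ (G n).1} with hA₀def
    -- choose witnesses
    set z : ℕ → X := fun n =>
      if hn : ((G n).1 \ H.1).Nonempty then hn.choose else H.2.2.choose with hzdef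
    have hz : ∀ n ∈ A₀, z n ∈ (G n).1 \ H.1 := by
      intro n hn
      have hne : ((G n).1 \ H.1).Nonempty := by
        rw [Set.diff_nonempty]
        intro hle
        exact hn.1 (Subtype.ext (hle.antisymm hn.2))
      simp only [hzdef, dif_pos hne]
      exact hne.choose_spec
    have hUfin : ∀ U : Set X, IsOpen U → H.1 ⊆ U → {n ∈ A₀ | z n ∉ U}.Finite := by
      intro U hU hHU
      obtain ⟨N, hN⟩ := eventually_atTop.1 ((tendsto_PR_iff G H).1 htend U hU hHU)
      refine (Set.finite_Iio N).subset ?_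
      rintro n ⟨hnA, hnU⟩
      by_contra hlt
      rw [Set.mem_Iio, not_lt] at hlt
      exact hnU ((hN n hlt).2 (hz n hnA).1)
    obtain ⟨h, hhK, B, hBA₀, hBinf, hconv⟩ :=
      aux_extract z H.2.1.toFinset A₀ hA₀
        (by intro U hU hKU
            exact hUfin U hU (by rwa [Set.Finite.coe_toFinset] at hKU))
    -- subsequence
    let e : ℕ ↪ B := hBinf.natEmbedding B
    let e' : ℕ → ℕ := fun k => (e k).1
    have hinj : Function.Injective e' := fun a b hab => e.injective (Subtype.ext hab)
    have hmemB : ∀ k, e' k ∈ B := fun k => (e k).2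
    set w : ℕ → X := fun k => z (e' k) with hwdef
    have htw : Tendsto w atTop (nhds h) := by
      rw [← Nat.cofinite_eq_atTop, Filter.tendsto_def]
      intro s hs
      obtain ⟨V, hVs, hVo, hhV⟩ := mem_nhds_iff.1 hs
      rw [Filter.mem_cofinite]
      refine (((hconv V hVo hhV).preimage (hinj.injOn)).subset ?_)
      intro k hk
      exact ⟨hmemB k, fun hkV => hk (hVs hkV)⟩
    obtain ⟨m, hm⟩ := hSD w h htw
    set c : X := w m with hcdef
    have hcH : c ∉ H.1 := (hz _ (hBA₀ (hmemB m))).2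
    have hSc : {n | c ∈ (G n).1}.Finite := by
      obtain ⟨N, hN⟩ := eventually_atTop.1 ((tendsto_PR_iff G H).1 htend {c}ᶜ
        isOpen_compl_singleton (fun x hx hxc => hcH (hxc ▸ hx)))
      refine (Set.finite_Iio N).subset ?_
      intro n hn
      by_contra hlt
      rw [Set.mem_Iio, not_lt] at hlt
      exact (hN n hlt).2 hn rfl
    have hsub2 : Set.Ici m ⊆ e' ⁻¹' {n | c ∈ (G n).1} := by
      intro k hk
      have h1 : z (e' k) = c := hm k hk
      have h2 : z (e' k) ∈ (G (e' k)).1 := (hz _ (hBA₀ (hmemB k))).1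
      exact Set.mem_preimage.2 (h1 ▸ h2)
    exact ((Set.Ici_infinite m).mono hsub2) (hSc.preimage hinj.injOn)
  · -- SD (PR X) → SD X
    intro hSD x y hx
    set G : ℕ → PR X := fun n =>
      ⟨{y, x n}, (Set.finite_singleton (x n)).insert y, ⟨y, Set.mem_insert _ _⟩⟩ with hGdef
    have hH : ({y} : Set X).Finite ∧ ({y} : Set X).Nonempty :=
      ⟨Set.finite_singleton y, Set.singleton_nonempty y⟩
    have htend : Tendsto G atTop (nhds (⟨{y}, hH⟩ : PR X)) := by
      apply (tendsto_PR_iff G _).2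
      intro U hU hyU
      have hy : y ∈ U := hyU rfl
      filter_upwards [hx (hU.mem_nhds hy)] with n hn
      exact ⟨Set.singleton_subset_iff.2 (Set.mem_insert _ _),
        Set.insert_subset hy (Set.singleton_subset_iff.2 hn)⟩
    obtain ⟨m, hm⟩ := hSD G _ htend
    refine ⟨m, fun n hn => ?_⟩
    have hset : ({y, x n} : Set X) = {y, x m} := congrArg Subtype.val (hm n hn)
    have hxn : x n ∈ ({y, x m} : Set X) := hset ▸ Set.mem_insert_of_mem y rfl
    rcases hxn with hxn | hxn
    · -- x n = y
      have hxm : x m ∈ ({y, x n} : Set X) := hset ▸ Set.mem_insert_of_mem y rfl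
      rcases hxm with hxm | hxm
      · rw [hxn, hxm]
      · exact hxm.symm
    · exact hxn
end

section
/- Every weakly selectively highly divergent (WSHD) topological space is openly highly divergent (OHD). -/
open Filter Topology Set

theorem OpenSeqTendsto.tendsto_of_eventually_mem {X ι : Type*} [TopologicalSpace X]
    {U : ℕ → Set X} {y : X} (hU : OpenSeqTendsto U y) {l : Filter ι} {f : ι → X} {φ : ι → ℕ}
    (hφ : Tendsto φ l atTop) (hf : ∀ᶠ i in l, f i ∈ U (φ i)) : Tendsto f l (𝓝 y) := by
  refine tendsto_nhds.2 fun V hV hyV => ?_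
  obtain ⟨m, hm⟩ := hU V hV hyV
  filter_upwards [hφ.eventually_ge_atTop m, hf] with i hi hfi using hm _ hi hfi

theorem statement6 {X : Type*} [TopologicalSpace X] (h : WSHD X) : OHD X := by
  rintro ⟨U, y, hU_open, hU_ne, hUy⟩
  obtain ⟨A, hA, x, hxA, hx⟩ := h U hU_open hU_ne
  have hmem : ∀ n, Nat.nth (· ∈ A) n ∈ A := Nat.nth_mem_of_infinite hA
  have hmono : StrictMono (Nat.nth (· ∈ A)) := Nat.nth_strictMono hA
  exact hx _ hmono hmem y <|
    hUy.tendsto_of_eventually_mem hmono.tendsto_atTop (.of_forall fun n => hxA _ (hmem n))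
end

section
/- If X is a regular OHD space and D is a dense subset of X, then D with the subspace topology is OHD. -/
open Filter Topology Set

/-! Every open `U ⊆ X` lies in `closure (U ∩ D)` for dense `D`; so once the traces `U n ∩ D`
lie in the interior of a closed neighbourhood `s` of `d`, which regularity provides inside any
neighbourhood of `d`, the sets `U n` lie in `s` as well. Hence a sequence of nonempty open subsets
of `D` converging to `d` lifts to one of `X` converging to `d`. -/

theorem OpenSeqTendsto.of_preimage_val {X : Type*} [TopologicalSpace X] [RegularSpace X]
    {D : Set X} (hD : Dense D) {U : ℕ → Set X} (hU : ∀ n, IsOpen (U n)) {d : D}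
    (h : OpenSeqTendsto (fun n => ((↑) : D → X) ⁻¹' U n) d) : OpenSeqTendsto U d := by
  intro W hW hdW
  obtain ⟨s, ⟨hs, hs_closed⟩, hsW⟩ :=
    (closed_nhds_basis (d : X)).mem_iff.mp (hW.mem_nhds hdW)
  obtain ⟨m, hm⟩ := h (((↑) : D → X) ⁻¹' interior s)
    (isOpen_interior.preimage continuous_subtype_val) (mem_interior_iff_mem_nhds.mpr hs)
  refine ⟨m, fun n hn => ?_⟩
  have h_trace : U n ∩ D ⊆ interior s := by
    rw [inter_comm, ← Subtype.image_preimage_coe]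
    exact image_subset_iff.mpr (hm n hn)
  calc U n ⊆ closure (U n ∩ D) := hD.open_subset_closure_inter (hU n)
    _ ⊆ closure (interior s) := closure_mono h_trace
    _ ⊆ s := hs_closed.closure_subset_iff.mpr interior_subset
    _ ⊆ W := hsW

theorem statement7 {X : Type*} [TopologicalSpace X] [RegularSpace X] (h : OHD X)
    (D : Set X) (hD : Dense D) : OHD ↥D := by
  rintro ⟨V, d, hV_open, hV_ne, hV_tendsto⟩
  choose U hU_open hU_preimage using fun n => isOpen_induced_iff.mp (hV_open n)
  obtain rfl : (fun n => ((↑) : D → X) ⁻¹' U n) = V := funext hU_preimage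
  refine h ⟨U, d, hU_open, fun n => ?_, hV_tendsto.of_preimage_val hD hU_open⟩
  obtain ⟨y, hy⟩ := hV_ne n
  exact ⟨y, hy⟩
end

section
/- If X is a T1 topological space with at least two points and κ is an uncountable cardinal, then the power X^κ (with the product topology) is OHD. -/
open Filter Topology Set

/-!
A nonempty open subset of a product contains a basic box around one of its points, and the box
restricts only finitely many coordinates. Countably many open sets therefore leave some
coordinate `α` unrestricted, by uncountability. If the open sets converged to `x`, they would
eventually lie in the open set `{y | y α ≠ b}` for some `b ≠ x α` (open by T1), yet each of them
contains a point whose `α`-coordinate is `b`.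
-/

section

variable {ι : Type*} {X : ι → Type*} [∀ i, TopologicalSpace (X i)]

lemma IsOpen.exists_finset_forall_update_mem [DecidableEq ι] {U : Set (∀ i, X i)}
    (hU : IsOpen U) (hne : U.Nonempty) :
    ∃ z ∈ U, ∃ I : Finset ι, ∀ i ∉ I, ∀ b : X i, Function.update z i b ∈ U := by
  obtain ⟨z, hz⟩ := hne
  obtain ⟨I, u, hu, hbox⟩ := isOpen_pi_iff.mp hU z hz
  refine ⟨z, hz, I, fun i hi b => hbox fun j hj => ?_⟩
  have hji : j ≠ i := fun h => hi (h ▸ hj)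
  rw [Function.update_of_ne hji]
  exact (hu j hj).2

lemma exists_forall_notMem_finset [Uncountable ι] (I : ℕ → Finset ι) : ∃ i, ∀ n, i ∉ I n := by
  have hcount : (⋃ n, (I n : Set ι)).Countable :=
    countable_iUnion fun n => (I n).countable_toSet
  obtain ⟨i, hi⟩ : ∃ i, i ∉ ⋃ n, (I n : Set ι) :=
    (ne_univ_iff_exists_notMem _).mp fun h => not_countable_univ (h ▸ hcount)
  exact ⟨i, fun n hn => hi (mem_iUnion.mpr ⟨n, hn⟩)⟩

theorem not_openSeqTendsto_pi [Uncountable ι] [∀ i, T1Space (X i)] [∀ i, Nontrivial (X i)]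
    {U : ℕ → Set (∀ i, X i)} (hUo : ∀ n, IsOpen (U n)) (hUne : ∀ n, (U n).Nonempty)
    (x : ∀ i, X i) : ¬ OpenSeqTendsto U x := by
  classical
  intro hconv
  choose z _ I hI using fun n => (hUo n).exists_finset_forall_update_mem (hUne n)
  obtain ⟨α, hα⟩ := exists_forall_notMem_finset I
  obtain ⟨b, hb⟩ := exists_ne (x α)
  have hV : IsOpen {y : ∀ i, X i | y α ≠ b} :=
    isOpen_compl_singleton.preimage (continuous_apply α)
  obtain ⟨m, hm⟩ := hconv _ hV hb.symm
  exact hm m le_rfl (hI m α (hα m) b) (Function.update_self α b (z m))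

end

theorem statement8 {X : Type*} [TopologicalSpace X] [T1Space X] [Nontrivial X]
    {κ : Type*} [Uncountable κ] : OHD (κ → X) := by
  rintro ⟨U, x, hUo, hUne, hconv⟩
  exact not_openSeqTendsto_pi hUo hUne x hconv
end

section
/- Let X be a regular T1 space with at least two points such that there exists a sequence of nonempty open subsets of X converging to some point p ∈ X, and let κ be an infinite cardinal. Then the following statements are equivalent: (1) X^κ is OHD; (2) Σ(X,p,κ) is OHD; (3) σ(X,p,κ) is OHD; (4) κ is uncountable. -/
open Filter Topology Set

/-!
A nonempty open subset of `X^κ` contains a box restricting only finitely many coordinates, so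
countably many of them leave a common coordinate `α` free when `κ` is uncountable. Moving the
`α`-th coordinate to a value `q ≠ x α` keeps a point inside each of these sets but outside the
neighbourhood `{y | y α ≠ q}` of a would-be limit `x`; this works in every subspace closed under
changing one coordinate, such as `Σ` and `σ`. If instead `κ` is countable, say injected into `ℕ`
by `e`, the sets `{y | ∀ α, e α < n → y α ∈ U n}` converge to the constant `p`, and each meets `σ`.
-/

section Subspace

variable {Y Z : Type*} [TopologicalSpace Y] [TopologicalSpace Z]

theorem openSeqTendsto_iff_eventually_subset {U : ℕ → Set Y} {x : Y} :
    OpenSeqTendsto U x ↔ ∀ V ∈ 𝓝 x, ∀ᶠ n in atTop, U n ⊆ V := by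
  constructor
  · intro hU V hV
    obtain ⟨W, hWV, hWo, hxW⟩ := mem_nhds_iff.mp hV
    obtain ⟨m, hm⟩ := hU W hWo hxW
    exact eventually_atTop.mpr ⟨m, fun n hn => (hm n hn).trans hWV⟩
  · intro hU V hVo hxV
    exact eventually_atTop.mp (hU V (hVo.mem_nhds hxV))

theorem OpenSeqTendsto.preimage {f : Y → Z} (hf : IsInducing f) {V : ℕ → Set Z} {y : Y}
    (hV : OpenSeqTendsto V (f y)) : OpenSeqTendsto (fun n => f ⁻¹' V n) y := by
  rw [openSeqTendsto_iff_eventually_subset] at hV ⊢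
  intro W hW
  rw [hf.nhds_eq_comap, mem_comap] at hW
  obtain ⟨t, ht, htW⟩ := hW
  filter_upwards [hV t ht] with n hn using (preimage_mono hn).trans htW

theorem not_ohd_of_isInducing {f : Y → Z} (hf : IsInducing f) {V : ℕ → Set Z} (hVo : ∀ n, IsOpen (V n))
    (hVne : ∀ n, (V n ∩ range f).Nonempty) {y : Y} (hV : OpenSeqTendsto V (f y)) :
    ¬ OHD Y := by
  refine fun hY => hY ⟨fun n => f ⁻¹' V n, y, fun n => (hVo n).preimage hf.continuous,
    fun n => ?_, hV.preimage hf⟩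
  obtain ⟨_, hzV, z, rfl⟩ := hVne n
  exact ⟨z, hzV⟩

end Subspace

section Product

variable {ι : Type*} [DecidableEq ι] {π : ι → Type*} [∀ i, TopologicalSpace (π i)]

theorem exists_finset_forall_update_mem {W : Set (∀ i, π i)} (hW : IsOpen W) {z : ∀ i, π i}
    (hz : z ∈ W) : ∃ I : Finset ι, ∀ α ∉ I, ∀ q : π α, Function.update z α q ∈ W := by
  obtain ⟨I, u, hu, hIW⟩ := isOpen_pi_iff.mp hW z hz
  refine ⟨I, fun α hα q => hIW fun i hi => ?_⟩
  rw [Function.update_of_ne (ne_of_mem_of_not_mem hi hα)]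
  exact (hu i hi).2

theorem exists_forall_update_mem_of_uncountable [Uncountable ι] {W : ℕ → Set (∀ i, π i)}
    (hW : ∀ n, IsOpen (W n)) {z : ℕ → ∀ i, π i} (hz : ∀ n, z n ∈ W n) :
    ∃ α, ∀ n, ∀ q : π α, Function.update (z n) α q ∈ W n := by
  choose I hI using fun n => exists_finset_forall_update_mem (hW n) (hz n)
  have hcount : (⋃ n, (I n : Set ι)).Countable := countable_iUnion fun n => (I n).countable_toSet
  obtain ⟨α, hα⟩ := (ne_univ_iff_exists_notMem (⋃ n, (I n : Set ι))).mp
    fun h => not_countable_univ (h ▸ hcount)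
  exact ⟨α, fun n => hI n α fun h => hα (mem_iUnion.mpr ⟨n, h⟩)⟩

end Product

theorem ohd_of_isInducing {X Y κ : Type*} [TopologicalSpace X] [T1Space X] [Nontrivial X]
    [TopologicalSpace Y] [DecidableEq κ] [Uncountable κ] {f : Y → κ → X} (hf : IsInducing f)
    (hupdate : ∀ y α q, Function.update (f y) α q ∈ range f) : OHD Y := by
  rintro ⟨U, x, hUo, hUne, hU⟩
  choose W hWo hWU using fun n => hf.isOpen_iff.mp (hUo n)
  choose y hy using hUne
  have hfy : ∀ n, f (y n) ∈ W n := fun n => by rw [← mem_preimage, hWU]; exact hy n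
  obtain ⟨α, hα⟩ := exists_forall_update_mem_of_uncountable hWo hfy
  obtain ⟨q, hq⟩ := exists_ne (f x α)
  obtain ⟨m, hm⟩ := hU (f ⁻¹' ((· α) ⁻¹' {q}ᶜ))
    ((isOpen_compl_singleton.preimage (continuous_apply α)).preimage hf.continuous) hq.symm
  obtain ⟨y', hy'⟩ := hupdate (y m) α q
  have hy'U : y' ∈ U m := by rw [← hWU, mem_preimage, hy']; exact hα m q
  simpa [hy'] using hm m le_rfl hy'U

theorem exists_openSeqTendsto_const_pi {X : Type*} [TopologicalSpace X] {p : X}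
    {U : ℕ → Set X} (hUo : ∀ n, IsOpen (U n)) (hUne : ∀ n, (U n).Nonempty)
    (hU : OpenSeqTendsto U p) (κ : Type*) [Countable κ] :
    ∃ V : ℕ → Set (κ → X), (∀ n, IsOpen (V n)) ∧
      (∀ n, (V n ∩ SmallSigmaProd X p κ).Nonempty) ∧ OpenSeqTendsto V (fun _ => p) := by
  classical
  obtain ⟨e, he⟩ := exists_injective_nat κ
  have hfin : ∀ n, {α | e α < n}.Finite := fun n => (finite_lt_nat n).preimage he.injOn
  refine ⟨fun n => {α | e α < n}.pi fun _ => U n, fun n => isOpen_set_pi (hfin n)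
    fun _ _ => hUo n, fun n => ?_, ?_⟩
  · obtain ⟨v, hv⟩ := hUne n
    refine ⟨fun α => if e α < n then v else p, fun α hα => by simp [show e α < n from hα, hv],
      (hfin n).subset fun α hα => ?_⟩
    by_contra h
    exact hα (if_neg h)
  · rw [openSeqTendsto_iff_eventually_subset] at hU ⊢
    intro O hO
    rw [nhds_pi, Filter.mem_pi] at hO
    obtain ⟨I, hI, t, ht, hIO⟩ := hO
    have hcoord : ∀ α ∈ I, ∀ᶠ n in atTop, e α < n ∧ U n ⊆ t α :=
      fun α _ => (eventually_gt_atTop (e α)).and (hU (t α) (ht α))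
    filter_upwards [(eventually_all_finite hI).mpr hcoord] with n hn x hx
    exact hIO fun α hα => (hn α hα).2 (hx α (hn α hα).1)

theorem not_ohd_of_countable {X Y κ : Type*} [TopologicalSpace X] [TopologicalSpace Y]
    [Countable κ] {p : X} {U : ℕ → Set X} (hUo : ∀ n, IsOpen (U n))
    (hUne : ∀ n, (U n).Nonempty) (hU : OpenSeqTendsto U p) {f : Y → κ → X} (hf : IsInducing f)
    (hσ : SmallSigmaProd X p κ ⊆ range f) : ¬ OHD Y := by
  obtain ⟨V, hVo, hVne, hV⟩ := exists_openSeqTendsto_const_pi hUo hUne hU κ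
  obtain ⟨y, hy⟩ := hσ (show {α : κ | p ≠ p}.Finite by simp)
  exact not_ohd_of_isInducing hf hVo (fun n => (hVne n).mono (inter_subset_inter_right _ hσ))
    (hy ▸ hV)

theorem setOf_update_ne_subset {κ X : Type*} [DecidableEq κ] (f : κ → X) (p : X) (α : κ)
    (q : X) : {β | Function.update f α q β ≠ p} ⊆ insert α {β | f β ≠ p} := by
  intro β hβ
  rcases eq_or_ne β α with rfl | hne
  · exact mem_insert β _
  · exact mem_insert_of_mem α (by simpa [Function.update_of_ne hne] using hβ)

theorem statement9_general {X : Type*} [TopologicalSpace X] [T1Space X] [Nontrivial X]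
    (p : X)
    (hp : ∃ U : ℕ → Set X, (∀ n, IsOpen (U n)) ∧ (∀ n, (U n).Nonempty) ∧ OpenSeqTendsto U p)
    (κ : Type*) :
    List.TFAE [OHD (κ → X), OHD ↥(SigmaProd X p κ), OHD ↥(SmallSigmaProd X p κ),
      Uncountable κ] := by
  classical
  obtain ⟨U, hUo, hUne, hU⟩ := hp
  have of_countable {Y : Type _} [TopologicalSpace Y] {f : Y → κ → X} (hf : IsInducing f)
      (hσ : SmallSigmaProd X p κ ⊆ range f) (hY : OHD Y) : Uncountable κ := by
    by_contra hκ
    have := not_uncountable_iff.mp hκ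
    exact not_ohd_of_countable hUo hUne hU hf hσ hY
  tfae_have 1 → 4 := of_countable IsInducing.id (by simp)
  tfae_have 2 → 4 := of_countable IsInducing.subtypeVal
    fun x hx => ⟨⟨x, Finite.countable hx⟩, rfl⟩
  tfae_have 3 → 4 := of_countable IsInducing.subtypeVal fun x hx => ⟨⟨x, hx⟩, rfl⟩
  tfae_have 4 → 1 := fun _ => ohd_of_isInducing IsInducing.id fun _ _ _ => ⟨_, rfl⟩
  tfae_have 4 → 2 := fun _ => ohd_of_isInducing IsInducing.subtypeVal fun x α q =>
    ⟨⟨_, (x.2.insert α).mono (setOf_update_ne_subset x p α q)⟩, rfl⟩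
  tfae_have 4 → 3 := fun _ => ohd_of_isInducing IsInducing.subtypeVal fun x α q =>
    ⟨⟨_, (x.2.insert α).subset (setOf_update_ne_subset x p α q)⟩, rfl⟩
  tfae_finish

theorem statement9 {X : Type*} [TopologicalSpace X] [RegularSpace X] [T1Space X] [Nontrivial X]
    (p : X)
    (hp : ∃ U : ℕ → Set X, (∀ n, IsOpen (U n)) ∧ (∀ n, (U n).Nonempty) ∧ OpenSeqTendsto U p)
    (κ : Type*) [Infinite κ] :
    List.TFAE [OHD (κ → X), OHD ↥(SigmaProd X p κ), OHD ↥(SmallSigmaProd X p κ),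
      Uncountable κ] :=
  statement9_general p hp κ
end

section
/- For every uncountable cardinal κ and every p ∈ D(2), the space Σ(D(2),p,κ) is OHD and is not WSHD. -/
open Filter Topology Set

/-!
An open set of `Σ(Y, p, κ)` constrains only finitely many coordinates near each of its points,
so countably many nonempty open sets `U n` together constrain only countably many. When `κ` is
uncountable some coordinate `α` is free in every `U n` and equal to `p` at `x`; setting it to
some `q ≠ p` produces a point of every `U n` outside the neighbourhood `{w | w α ≠ q}` of `x`,
so the `U n` cannot converge to `x`.

Conversely, countably many points of `Σ(Y, p, κ)` are all supported in one countable set `C` of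
coordinates, hence lie in a copy of `Y ^ C`, which is sequentially compact for compact first
countable `Y`. So every sequence has a convergent subsequence, which rules out WSHD.
-/

theorem exists_finset_forall_eqOn_mem {κ Y : Type*} [TopologicalSpace Y] {S : Set (κ → Y)}
    {U : Set S} (hU : IsOpen U) {z : S} (hz : z ∈ U) :
    ∃ I : Finset κ, ∀ w : S, EqOn (w : κ → Y) z I → w ∈ U := by
  obtain ⟨O, hO, rfl⟩ := isOpen_induced_iff.mp hU
  obtain ⟨I, u, hu, hIu⟩ := isOpen_pi_iff.mp hO _ hz
  exact ⟨I, fun w hw => hIu fun a ha => hw ha ▸ (hu a ha).2⟩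

theorem not_wshd_of_seqCompactSpace {X : Type*} [TopologicalSpace X] [Nonempty X]
    [SeqCompactSpace X] : ¬ WSHD X := by
  intro hX
  obtain ⟨A, hA, x, -, hdiv⟩ :=
    hX (fun _ => univ) (fun _ => isOpen_univ) (fun _ => univ_nonempty)
  obtain ⟨y, ψ, hψ, hy⟩ := SeqCompactSpace.tendsto_subseq (x ∘ Nat.nth (· ∈ A))
  exact hdiv (Nat.nth (· ∈ A) ∘ ψ) ((Nat.nth_strictMono hA).comp hψ)
    (fun n => Nat.nth_mem_of_infinite hA _) y hy

namespace SigmaProd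

variable {Y κ : Type*} {p : Y}

theorem update_mem [DecidableEq κ] {x : κ → Y} (hx : x ∈ SigmaProd Y p κ) (α : κ) (y : Y) :
    Function.update x α y ∈ SigmaProd Y p κ := by
  refine (hx.insert α).mono fun β hβ => ?_
  by_cases hβα : β = α
  · exact Or.inl hβα
  · exact Or.inr (by simpa [Function.update_of_ne hβα] using hβ)

instance : Nonempty (SigmaProd Y p κ) := ⟨⟨fun _ => p, by simp [SigmaProd]⟩⟩

variable [TopologicalSpace Y]

theorem ohd [T1Space Y] [Nontrivial Y] [Uncountable κ] : OHD (SigmaProd Y p κ) := by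
  classical
  rintro ⟨U, x, hU, hne, hconv⟩
  choose z hz using hne
  choose I hI using fun n => exists_finset_forall_eqOn_mem (hU n) (hz n)
  obtain ⟨q, hqp⟩ := exists_ne p
  have hcount : ({β | (x : κ → Y) β ≠ p} ∪ ⋃ n, (I n : Set κ)).Countable :=
    x.2.union (countable_iUnion fun n => (I n).countable_toSet)
  obtain ⟨α, hα⟩ : ∃ α, α ∉ {β | (x : κ → Y) β ≠ p} ∪ ⋃ n, (I n : Set κ) := by
    by_contra! h
    exact not_countable_univ (hcount.mono fun β _ => h β)
  simp only [mem_union, mem_ofPred_eq, mem_iUnion, Finset.mem_coe, not_or, not_not,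
    not_exists] at hα
  have hV : IsOpen {w : SigmaProd Y p κ | (w : κ → Y) α ≠ q} :=
    isOpen_compl_singleton.preimage ((continuous_apply α).comp continuous_subtype_val)
  obtain ⟨m, hm⟩ := hconv _ hV (by simpa [hα.1] using hqp.symm)
  let w : SigmaProd Y p κ := ⟨Function.update (z m) α q, update_mem (z m).2 α q⟩
  have hw : w ∈ U m := hI m w fun a ha =>
    Function.update_of_ne (show a ≠ α by rintro rfl; exact hα.2 m ha) _ _
  exact hm m le_rfl hw (by simp [w])

instance [CompactSpace Y] [FirstCountableTopology Y] : SeqCompactSpace (SigmaProd Y p κ) := by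
  classical
  refine ⟨fun z _ => ?_⟩
  let C := ⋃ n, {α | (z n : κ → Y) α ≠ p}
  have hC : C.Countable := countable_iUnion fun n => (z n).2
  have : Countable C := hC.to_subtype
  let extend : (C → Y) → κ → Y := fun g α => if h : α ∈ C then g ⟨α, h⟩ else p
  have hextend : Continuous extend := continuous_pi fun α => by
    by_cases h : α ∈ C
    · simpa [extend, h] using continuous_apply _
    · simpa [extend, h] using continuous_const
  have hextend_mem (g : C → Y) : extend g ∈ SigmaProd Y p κ :=
    hC.mono fun α hα => by_contra fun h => hα (dif_neg h)
  have hz (n : ℕ) : (z n : κ → Y) = extend fun c => (z n : κ → Y) c := funext fun α => by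
    by_cases h : α ∈ C
    · simp [extend, h]
    · have hp : ∀ k, (z k : κ → Y) α = p := by simpa [C] using h
      simp [extend, h, hp n]
  obtain ⟨g, φ, hφ, hg⟩ := SeqCompactSpace.tendsto_subseq fun n (c : C) => (z n : κ → Y) c
  refine ⟨⟨extend g, hextend_mem g⟩, mem_univ _, φ, hφ, ?_⟩
  rw [tendsto_subtype_rng]
  simpa [Function.comp_def, ← hz] using (hextend.tendsto g).comp hg

end SigmaProd

theorem statement10 {κ : Type*} [Uncountable κ] (p : Bool) :
    OHD ↥(SigmaProd Bool p κ) ∧ ¬ WSHD ↥(SigmaProd Bool p κ) :=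
  ⟨SigmaProd.ohd, not_wshd_of_seqCompactSpace⟩
end

section
/- Let X be a Hausdorff space and let F be a nonempty finite subset of X (i.e., F ∈ 𝔉[X]). Then the following statements are equivalent: (1) X has a countable local base at every point of F; (2) 𝔉[X] has a countable local base at F; (3) 𝔉[X] has a countable local π-base at F; (4) there is a sequence of nonempty open subsets of 𝔉[X] converging to F; (5) there are nonempty finite sets F_n ⊆ X and open sets U_n ⊆ X with F_n ⊆ U_n such that the sequence of basic open sets ([F_n,U_n])_{n∈ℕ} converges to F in 𝔉[X]. -/
open Filter Topology Set

section PRAux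

variable {X : Type*} [TopologicalSpace X]

lemma PR.isOpen_basic (F : PR X) {U : Set X} (hU : IsOpen U) :
    IsOpen (PRBasic F.1 U) :=
  TopologicalSpace.isOpen_generateFrom_of_mem ⟨F, U, hU, rfl⟩

lemma PR.isBasis :
    TopologicalSpace.IsTopologicalBasis
      {S : Set (PR X) | ∃ (F : PR X) (U : Set X), IsOpen U ∧ S = PRBasic F.1 U} := by
  refine ⟨?_, ?_, rfl⟩
  · rintro _ ⟨F₁, U₁, h₁, rfl⟩ _ ⟨F₂, U₂, h₂, rfl⟩ x ⟨⟨ha, hb⟩, hc, hd⟩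
    refine ⟨PRBasic (F₁.1 ∪ F₂.1) (U₁ ∩ U₂),
      ⟨⟨F₁.1 ∪ F₂.1, F₁.2.1.union F₂.2.1, F₁.2.2.mono subset_union_left⟩,
        U₁ ∩ U₂, h₁.inter h₂, rfl⟩, ⟨union_subset ha hc, subset_inter hb hd⟩, ?_⟩
    rintro G ⟨hG1, hG2⟩
    exact ⟨⟨subset_union_left.trans hG1, hG2.trans inter_subset_left⟩,
      subset_union_right.trans hG1, hG2.trans inter_subset_right⟩
  · ext x
    simp only [mem_sUnion, mem_univ, iff_true]
    exact ⟨PRBasic x.1 univ, ⟨x, univ, isOpen_univ, rfl⟩, subset_rfl, subset_univ _⟩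

set_option linter.unusedSectionVars false in
lemma PR.basic_subset_basic {G : PR X} {U : Set X} (hGU : G.1 ⊆ U) {S V : Set X}
    (h : PRBasic G.1 U ⊆ PRBasic S V) : S ⊆ G.1 ∧ U ⊆ V := by
  have h1 := h (show G ∈ PRBasic G.1 U from ⟨subset_rfl, hGU⟩)
  refine ⟨h1.1, fun y hy => ?_⟩
  have h2 := h (show (⟨insert y G.1, G.2.1.insert y, (G.2.2).mono (subset_insert y G.1)⟩ : PR X)
      ∈ PRBasic G.1 U from ⟨subset_insert y G.1, insert_subset hy hGU⟩)
  exact h2.2 (mem_insert y G.1)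

lemma PR.exists_basic_subset {F : PR X} {W : Set (PR X)} (hW : IsOpen W) (hF : F ∈ W) :
    ∃ U : Set X, IsOpen U ∧ F.1 ⊆ U ∧ PRBasic F.1 U ⊆ W := by
  obtain ⟨t, ⟨G, U, hU, rfl⟩, hFt, htW⟩ := PR.isBasis.exists_subset_of_mem_open hF hW
  exact ⟨U, hU, hFt.2, fun H hH => htW ⟨hFt.1.trans hH.1, hH.2⟩⟩

end PRAux

theorem statement11 {X : Type*} [TopologicalSpace X] [T2Space X] (F : PR X) :
    List.TFAE [
      ∀ x ∈ F.1, HasCountableLocalBase x,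
      HasCountableLocalBase F,
      HasCountableLocalPiBase F,
      ∃ V : ℕ → Set (PR X), (∀ n, IsOpen (V n)) ∧ (∀ n, (V n).Nonempty) ∧ OpenSeqTendsto V F,
      ∃ (Fn : ℕ → PR X) (Un : ℕ → Set X), (∀ n, IsOpen (Un n)) ∧ (∀ n, (Fn n).1 ⊆ Un n) ∧
        OpenSeqTendsto (fun n => PRBasic (Fn n).1 (Un n)) F] := by
  tfae_have 1 → 2 := by
    intro h1
    choose! Bx hc hop hb using h1
    set C : Set (Set X) := ⋃ x ∈ F.1, Bx x with hC
    have hCc : C.Countable := Set.Countable.biUnion F.2.1.countable fun x hx => hc x hx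
    have hCopen : ∀ V ∈ C, IsOpen V := by
      intro V hV
      obtain ⟨x, hx, hVx⟩ := mem_iUnion₂.mp hV
      exact (hop x hx V hVx).1
    refine ⟨(fun s => PRBasic F.1 (⋃₀ s)) '' {s | (s.Finite ∧ s ⊆ C) ∧ F.1 ⊆ ⋃₀ s},
      ((Set.countable_setOf_finite_subset hCc).mono
        (fun s hs => hs.1)).image _, ?_, ?_⟩
    · rintro _ ⟨s, ⟨⟨hsf, hsC⟩, hFs⟩, rfl⟩
      exact ⟨PR.isOpen_basic F (isOpen_sUnion fun V hV => hCopen V (hsC hV)),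
        subset_rfl, hFs⟩
    · intro W hWo hFW
      obtain ⟨U, hUo, hFU, hUW⟩ := PR.exists_basic_subset hWo hFW
      have hsel : ∀ x ∈ F.1, ∃ V, V ∈ Bx x ∧ V ⊆ U ∧ x ∈ V := by
        intro x hx
        obtain ⟨V, hV, hVU⟩ := hb x hx U hUo (hFU hx)
        exact ⟨V, hV, hVU, (hop x hx V hV).2⟩
      choose! g hg1 hg2 hg3 using hsel
      have hsub : ⋃₀ (g '' F.1) ⊆ U := by
        rintro z ⟨V, ⟨x, hx, rfl⟩, hz⟩
        exact hg2 x hx hz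
      refine ⟨PRBasic F.1 (⋃₀ (g '' F.1)),
        ⟨g '' F.1, ⟨⟨F.2.1.image g, ?_⟩, ?_⟩, rfl⟩, ?_⟩
      · rintro _ ⟨x, hx, rfl⟩
        exact mem_biUnion hx (hg1 x hx)
      · exact fun x hx => ⟨g x, ⟨x, hx, rfl⟩, hg3 x hx⟩
      · exact fun H hH => hUW ⟨hH.1, hH.2.trans hsub⟩
  tfae_have 2 → 3 := by
    rintro ⟨B, h1, h2, h3⟩
    exact ⟨B, h1, fun V hV => ⟨(h2 V hV).1, ⟨F, (h2 V hV).2⟩⟩, h3⟩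
  tfae_have 3 → 2 := by
    rintro ⟨B, hBc, hmem, hbase⟩
    have hsel : ∀ W ∈ B, ∃ (G : PR X) (U : Set X),
        IsOpen U ∧ G.1 ⊆ U ∧ PRBasic G.1 U ⊆ W := by
      intro W hW
      obtain ⟨hWo, H, hHW⟩ := hmem W hW
      obtain ⟨t, ⟨G, U, hUo, rfl⟩, hHt, htW⟩ := PR.isBasis.exists_subset_of_mem_open hHW hWo
      exact ⟨G, U, hUo, hHt.1.trans hHt.2, htW⟩
    choose! G u huo hGu hsub using hsel
    refine ⟨(fun W => PRBasic F.1 (u W)) '' {W ∈ B | F.1 ⊆ u W},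
      (hBc.mono (fun W hW => hW.1)).image _, ?_, ?_⟩
    · rintro _ ⟨W, ⟨hWB, hFu⟩, rfl⟩
      exact ⟨PR.isOpen_basic F (huo W hWB), subset_rfl, hFu⟩
    · intro A hAo hFA
      obtain ⟨U', hU'o, hFU', hU'A⟩ := PR.exists_basic_subset hAo hFA
      obtain ⟨W, hWB, hWsub⟩ := hbase (PRBasic F.1 U') (PR.isOpen_basic F hU'o)
        ⟨subset_rfl, hFU'⟩
      obtain ⟨hFG, hUU'⟩ := PR.basic_subset_basic (hGu W hWB) ((hsub W hWB).trans hWsub)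
      refine ⟨PRBasic F.1 (u W), ⟨W, ⟨hWB, hFG.trans (hGu W hWB)⟩, rfl⟩, ?_⟩
      exact fun H hH => hU'A ⟨hH.1, hH.2.trans hUU'⟩
  tfae_have 2 → 5 := by
    rintro ⟨B, hBc, hmem, hbase⟩
    have hne : B.Nonempty := by
      obtain ⟨V, hV, _⟩ := hbase univ isOpen_univ trivial
      exact ⟨V, hV⟩
    obtain ⟨f, hf⟩ := hBc.exists_eq_range hne
    have hfB : ∀ n, f n ∈ B := fun n => hf ▸ Set.mem_range_self n
    have hsel : ∀ n, ∃ U, IsOpen U ∧ F.1 ⊆ U ∧ PRBasic F.1 U ⊆ f n := fun n =>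
      PR.exists_basic_subset (hmem (f n) (hfB n)).1 (hmem (f n) (hfB n)).2
    choose u huo hFu hsub using hsel
    refine ⟨fun _ => F, fun n => ⋂ k ∈ Set.Iic n, u k,
      fun n => (Set.finite_Iic n).isOpen_biInter fun k _ => huo k,
      fun n => subset_iInter₂ fun k _ => hFu k, ?_⟩
    intro V hV hFV
    obtain ⟨W, hWB, hWV⟩ := hbase V hV hFV
    rw [hf] at hWB
    obtain ⟨m, rfl⟩ := hWB
    refine ⟨m, fun n hn H hH => hWV (hsub m ⟨hH.1, hH.2.trans ?_⟩)⟩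
    exact Set.biInter_subset_of_mem (show m ∈ Set.Iic n from hn)
  tfae_have 5 → 4 := by
    rintro ⟨Fn, Un, hUo, hsub, ht⟩
    exact ⟨_, fun n => PR.isOpen_basic (Fn n) (hUo n),
      fun n => ⟨Fn n, subset_rfl, hsub n⟩, ht⟩
  tfae_have 4 → 1 := by
    rintro ⟨V, hVo, hVne, hVt⟩ x hx
    have hsel : ∀ n, ∃ (H : PR X) (U : Set X),
        IsOpen U ∧ H.1 ⊆ U ∧ PRBasic H.1 U ⊆ V n := by
      intro n
      obtain ⟨G, hG⟩ := hVne n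
      obtain ⟨t, ⟨H, U, hUo, rfl⟩, hGt, htV⟩ :=
        PR.isBasis.exists_subset_of_mem_open hG (hVo n)
      exact ⟨H, U, hUo, hGt.1.trans hGt.2, htV⟩
    choose H u huo hHu hsub using hsel
    have key : ∀ A : Set X, IsOpen A → F.1 ⊆ A →
        ∃ m, ∀ n ≥ m, F.1 ⊆ (H n).1 ∧ u n ⊆ A := by
      intro A hA hFA
      obtain ⟨m, hm⟩ := hVt (PRBasic F.1 A) (PR.isOpen_basic F hA) ⟨subset_rfl, hFA⟩
      exact ⟨m, fun n hn => PR.basic_subset_basic (hHu n) ((hsub n).trans (hm n hn))⟩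
    obtain ⟨O, O', hOo, hO'o, hxO, hKO', hdisj⟩ :=
      SeparatedNhds.of_isCompact_isCompact isCompact_singleton
        (F.2.1.diff (t := {x})).isCompact
        (Set.disjoint_singleton_left.mpr fun h => h.2 rfl)
    have hxO' : x ∈ O := hxO rfl
    refine ⟨{S | ∃ n, x ∈ u n ∧ S = u n ∩ O},
      (Set.countable_range fun n => u n ∩ O).mono ?_, ?_, ?_⟩
    · rintro _ ⟨n, _, rfl⟩; exact ⟨n, rfl⟩
    · rintro _ ⟨n, hxn, rfl⟩
      exact ⟨(huo n).inter hOo, hxn, hxO'⟩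
    · intro A hA hxA
      have hFW : F.1 ⊆ (A ∩ O) ∪ O' := by
        intro y hy
        by_cases hyx : y = x
        · exact Or.inl ⟨hyx ▸ hxA, hyx ▸ hxO'⟩
        · exact Or.inr (hKO' ⟨hy, hyx⟩)
      obtain ⟨m, hm⟩ := key _ ((hA.inter hOo).union hO'o) hFW
      obtain ⟨hFH, huW⟩ := hm m le_rfl
      refine ⟨u m ∩ O, ⟨m, hHu m (hFH hx), rfl⟩, ?_⟩
      rintro z ⟨hz1, hz2⟩
      rcases huW hz1 with h | h
      · exact h.1
      · exact absurd h (Set.disjoint_left.mp hdisj hz2)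
  tfae_finish
end

section
/- Let X be a regular OHD space, let A be an infinite subset of ℕ, let {U_n : n ∈ A} be a family of nonempty open subsets of X, and let F be a nonempty finite subset of X. Then there exists a closed set V ⊆ X with F contained in the interior of V such that the set {n ∈ A : U_n \ V ≠ ∅} is infinite. -/
open Filter Topology Set

lemma key_single {X : Type*} [TopologicalSpace X] [RegularSpace X] (hX : OHD X)
    (B : Set ℕ) (hB : B.Infinite) (W : ℕ → Set X)
    (hWo : ∀ n ∈ B, IsOpen (W n)) (hWne : ∀ n ∈ B, (W n).Nonempty) (x : X) :
    ∃ V : Set X, IsClosed V ∧ x ∈ interior V ∧ {n ∈ B | (W n \ V).Nonempty}.Infinite := by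
  by_contra h
  push_neg at h
  apply hX
  set e := hB.natEmbedding with he
  refine ⟨fun m => W (e m), x, fun m => hWo _ (e m).2, fun m => hWne _ (e m).2, ?_⟩
  intro V hVo hxV
  obtain ⟨t, htx, htc, hts⟩ := exists_mem_nhds_isClosed_subset (hVo.mem_nhds hxV)
  have hint : x ∈ interior t := mem_interior_iff_mem_nhds.2 htx
  have hfin : {n ∈ B | (W n \ t).Nonempty}.Finite :=
    h t htc hint
  have hpre : {m : ℕ | ((e m : ℕ)) ∈ {n ∈ B | (W n \ t).Nonempty}}.Finite :=
    hfin.preimage ((Subtype.val_injective.comp e.injective).injOn)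
  obtain ⟨M, hM⟩ := hpre.bddAbove
  refine ⟨M + 1, fun m hm => subset_trans ?_ hts⟩
  by_contra hsub
  obtain ⟨a, ha, hna⟩ := Set.not_subset.1 hsub
  have : m ≤ M := hM ⟨(e m).2, ⟨a, ha, hna⟩⟩
  omega

lemma main_aux {X : Type*} [TopologicalSpace X] [RegularSpace X] (hX : OHD X)
    (F : Set X) (hF : F.Finite) :
    ∀ A : Set ℕ, A.Infinite → ∀ U : ℕ → Set X,
      (∀ n ∈ A, IsOpen (U n)) → (∀ n ∈ A, (U n).Nonempty) →
    ∃ V : Set X, IsClosed V ∧ F ⊆ interior V ∧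
      {n ∈ A | (U n \ V).Nonempty}.Infinite := by
  refine Set.Finite.induction_on F hF ?_ ?_
  · intro A hA U hUo hUne
    exact ⟨∅, isClosed_empty, by simp,
      hA.mono fun n hn => ⟨hn, by simpa using hUne n hn⟩⟩
  · intro x s hxs hs ih A hA U hUo hUne
    obtain ⟨V', hV'c, hV'i, hB⟩ := ih A hA U hUo hUne
    set B := {n ∈ A | (U n \ V').Nonempty} with hBdef
    have hBo : ∀ n ∈ B, IsOpen (U n \ V') :=
      fun n hn => (hUo n hn.1).sdiff hV'c
    have hBne : ∀ n ∈ B, (U n \ V').Nonempty := fun n hn => hn.2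
    obtain ⟨V'', hV''c, hxV'', hinf⟩ := key_single hX B hB _ hBo hBne x
    refine ⟨V' ∪ V'', hV'c.union hV''c, ?_, ?_⟩
    · rintro y (rfl | hy)
      · exact interior_mono Set.subset_union_right hxV''
      · exact interior_mono Set.subset_union_left (hV'i hy)
    · refine hinf.mono fun n hn => ⟨hn.1.1, ?_⟩
      have := hn.2
      rwa [Set.diff_diff] at this

theorem statement13 {X : Type*} [TopologicalSpace X] [RegularSpace X] (hX : OHD X)
    (A : Set ℕ) (hA : A.Infinite) (U : ℕ → Set X)
    (hUo : ∀ n ∈ A, IsOpen (U n)) (hUne : ∀ n ∈ A, (U n).Nonempty)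
    (F : Set X) (hF : F.Finite) (hFne : F.Nonempty) :
    ∃ V : Set X, IsClosed V ∧ F ⊆ interior V ∧
      {n ∈ A | (U n \ V).Nonempty}.Infinite := by
  exact main_aux hX F hF A hA U hUo hUne
end

section
/- If X is a regular OHD space, then the Pixley–Roy hyperspace 𝔉[X] is WSHD. -/
open Filter Topology Set

structure PRStage (X : Type*) where
  B : Set ℕ
  K : Set X
  a : ℕ
  p : X
  W : Set X

lemma depChoice {α : Sort*} (R : ℕ → α → α → Prop) (d0 : α)
    (hstep : ∀ j d, ∃ d', R j d d') :
    ∃ g : ℕ → α, g 0 = d0 ∧ ∀ j, R j (g j) (g (j + 1)) := by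
  choose f hf using hstep
  exact ⟨fun j => Nat.rec d0 f j, rfl, fun j => hf j _⟩

section AuxPR

variable {X : Type*} [TopologicalSpace X]

lemma aux_ohd (h : OHD X) (O : ℕ → Set X) (B : Set ℕ) (hB : B.Infinite)
    (hO : ∀ n ∈ B, IsOpen (O n)) (hne : ∀ n ∈ B, (O n).Nonempty) (z : X) :
    ∃ V : Set X, IsOpen V ∧ z ∈ V ∧ ∀ m : ℕ, ∃ n, n ∈ B ∧ m ≤ n ∧ ¬ O n ⊆ V := by
  by_contra hcon
  push_neg at hcon
  apply h
  have hBset : {n | n ∈ B}.Infinite := hB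
  refine ⟨fun k => O (Nat.nth (· ∈ B) k), z,
    fun k => hO _ (Nat.nth_mem_of_infinite hBset k),
    fun k => hne _ (Nat.nth_mem_of_infinite hBset k), ?_⟩
  intro V hV hzV
  obtain ⟨m, hm⟩ := hcon V hV hzV
  exact ⟨m, fun k hk => hm _ (Nat.nth_mem_of_infinite hBset k)
    (le_trans hk (Nat.nth_strictMono hBset).le_apply)⟩

lemma aux_point [RegularSpace X] (h : OHD X) (U : ℕ → Set X) (hU : ∀ n, IsOpen (U n))
    {K : Set X} (hK : IsClosed K) {B : Set ℕ} (hB : B.Infinite)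
    (hne : ∀ n ∈ B, (U n \ K).Nonempty) (z : X) :
    ∃ V : Set X, IsOpen V ∧ z ∈ V ∧ ∃ B' : Set ℕ, B' ⊆ B ∧ B'.Infinite ∧
      ∀ n ∈ B', (U n \ (K ∪ closure V)).Nonempty := by
  obtain ⟨V₀, hV₀, hzV₀, hinf⟩ :=
    aux_ohd h (fun n => U n \ K) B hB (fun n _ => (hU n).sdiff hK) hne z
  obtain ⟨t, htz, htc, hts⟩ := exists_mem_nhds_isClosed_subset (hV₀.mem_nhds hzV₀)
  refine ⟨interior t, isOpen_interior, mem_interior_iff_mem_nhds.2 htz,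
    {n | n ∈ B ∧ ¬ (U n \ K ⊆ V₀)}, fun n hn => hn.1, ?_, ?_⟩
  · by_contra hfin
    rw [Set.not_infinite] at hfin
    obtain ⟨b, hb⟩ := hfin.bddAbove
    obtain ⟨n, hnB, hbn, hnsub⟩ := hinf (b + 1)
    have : n ≤ b := hb ⟨hnB, hnsub⟩
    omega
  · intro n hn
    obtain ⟨x, hx, hxV₀⟩ := Set.not_subset.1 hn.2
    refine ⟨x, hx.1, ?_⟩
    rintro (hK' | hcl)
    · exact hx.2 hK'
    · exact hxV₀ (hts ((closure_minimal interior_subset htc) hcl))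

lemma aux_finset [RegularSpace X] (h : OHD X) (U : ℕ → Set X) (hU : ∀ n, IsOpen (U n))
    {K : Set X} (hK : IsClosed K) {B : Set ℕ} (hB : B.Infinite)
    (hne : ∀ n ∈ B, (U n \ K).Nonempty) (t : Finset X) :
    ∃ W D : Set X, IsOpen W ∧ ↑t ⊆ W ∧ W ⊆ D ∧ IsClosed D ∧
      ∃ B' : Set ℕ, B' ⊆ B ∧ B'.Infinite ∧ ∀ n ∈ B', (U n \ (K ∪ D)).Nonempty := by
  classical
  induction t using Finset.induction_on with
  | empty =>
      exact ⟨∅, ∅, isOpen_empty, by simp, Subset.rfl, isClosed_empty, B, Subset.rfl, hB,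
        by simpa using hne⟩
  | insert a s ha ih =>
      obtain ⟨W, D, hWo, htW, hWD, hDc, B₁, hB₁B, hB₁i, hne₁⟩ := ih
      obtain ⟨V, hVo, haV, B₂, hB₂, hB₂i, hne₂⟩ :=
        aux_point h U hU (hK.union hDc) hB₁i hne₁ _
      refine ⟨W ∪ V, D ∪ closure V, hWo.union hVo, ?_, union_subset_union hWD subset_closure,
        hDc.union isClosed_closure, B₂, hB₂.trans hB₁B, hB₂i, fun n hn => ?_⟩
      · rw [Finset.coe_insert]
        exact Set.insert_subset (Or.inr haV) (htW.trans Set.subset_union_left)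
      · have := hne₂ n hn
        rwa [union_assoc] at this

lemma aux_main [RegularSpace X] (h : OHD X) (U : ℕ → Set X) (hU : ∀ n, IsOpen (U n))
    {K : Set X} (hK : IsClosed K) {B : Set ℕ} (hB : B.Infinite)
    (hne : ∀ n ∈ B, (U n \ K).Nonempty) {H : Set X} (hH : H.Finite) (m : ℕ) :
    ∃ (W K' : Set X) (a : ℕ) (p : X) (B' : Set ℕ),
      IsOpen W ∧ H ⊆ W ∧ m < a ∧ p ∈ U a ∧ p ∉ K ∧ p ∉ W ∧ p ∈ K' ∧
      K ⊆ K' ∧ W ⊆ K' ∧ IsClosed K' ∧ B' ⊆ B ∧ B'.Infinite ∧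
      ∀ n ∈ B', (U n \ K').Nonempty := by
  obtain ⟨W, D, hWo, htW, hWD, hDc, B₁, hB₁B, hB₁i, hne₁⟩ := aux_finset h U hU hK hB hne hH.toFinset
  rw [Set.Finite.coe_toFinset] at htW
  obtain ⟨a, haB₁, ham⟩ : ∃ a ∈ B₁, m < a := by
    obtain ⟨a, ha⟩ := (hB₁i.diff (Set.finite_Iic m)).nonempty
    exact ⟨a, ha.1, by simpa using ha.2⟩
  obtain ⟨p, hpU, hpKD⟩ := hne₁ a haB₁
  obtain ⟨P, hPo, hpP, B', hB'B₁, hB'i, hne'⟩ :=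
    aux_point h U hU (hK.union hDc) hB₁i hne₁ p
  refine ⟨W, (K ∪ D) ∪ closure P, a, p, B', hWo, htW, ham, hpU,
    fun hc => hpKD (Or.inl hc), fun hc => hpKD (Or.inr (hWD hc)),
    Or.inr (subset_closure hpP), fun x hx => Or.inl (Or.inl hx),
    fun x hx => Or.inl (Or.inr (hWD hx)), (hK.union hDc).union isClosed_closure,
    hB'B₁.trans hB₁B, hB'i, hne'⟩

lemma prBasic_isOpen (H : PR X) {U : Set X} (hU : IsOpen U) : IsOpen (PRBasic H.1 U) := by
  show TopologicalSpace.GenerateOpen _ _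
  exact .basic _ ⟨H, U, hU, rfl⟩

lemma prOpen_subset {t : Set (PR X)} (ht : IsOpen t) :
    ∀ G ∈ t, ∃ U : Set X, IsOpen U ∧ G.1 ⊆ U ∧ PRBasic G.1 U ⊆ t := by
  have ht' : TopologicalSpace.GenerateOpen
      {S | ∃ (F : PR X) (U : Set X), IsOpen U ∧ S = PRBasic F.1 U} t := ht
  clear ht
  induction ht' with
  | basic s hs =>
      obtain ⟨F, U, hU, rfl⟩ := hs
      intro G hG
      exact ⟨U, hU, hG.2, fun G' hG' => ⟨hG.1.trans hG'.1, hG'.2⟩⟩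
  | univ =>
      intro G _
      exact ⟨Set.univ, isOpen_univ, Set.subset_univ _, Set.subset_univ _⟩
  | inter s u hs hu ihs ihu =>
      intro G hG
      obtain ⟨U₁, h1, h2, h3⟩ := ihs G hG.1
      obtain ⟨U₂, k1, k2, k3⟩ := ihu G hG.2
      exact ⟨U₁ ∩ U₂, h1.inter k1, Set.subset_inter h2 k2,
        fun G' hG' => ⟨h3 ⟨hG'.1, hG'.2.trans Set.inter_subset_left⟩,
          k3 ⟨hG'.1, hG'.2.trans Set.inter_subset_right⟩⟩⟩
  | sUnion S hS ih =>
      intro G hG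
      obtain ⟨s, hsS, hGs⟩ := hG
      obtain ⟨U, h1, h2, h3⟩ := ih s hsS G hGs
      exact ⟨U, h1, h2, fun G' hG' => ⟨s, hsS, h3 hG'⟩⟩

end AuxPR

theorem statement14 {X : Type*} [TopologicalSpace X] [RegularSpace X] (h : OHD X) :
    WSHD (PR X) := by
  classical
  intro 𝒱 h𝒱o h𝒱ne
  have hbasic : ∀ n, ∃ (F : PR X) (U : Set X), IsOpen U ∧ F.1 ⊆ U ∧ PRBasic F.1 U ⊆ 𝒱 n := by
    intro n
    obtain ⟨G, hG⟩ := h𝒱ne n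
    obtain ⟨U, hU, hGU, hsub⟩ := prOpen_subset (h𝒱o n) G hG
    exact ⟨G, U, hU, hGU, hsub⟩
  choose F U hUo hFU hsub using hbasic
  obtain ⟨x0, hx0⟩ := (F 0).2.2
  have hUne : ∀ n, (U n \ (∅ : Set X)).Nonempty := by
    intro n
    obtain ⟨y, hy⟩ := (F n).2.2
    exact ⟨y, hFU n hy, notMem_empty y⟩
  -- enumeration of candidate limit sets
  have hCcnt : (⋃ n, (F n).1).Countable := Set.countable_iUnion fun n => (F n).2.1.countable
  have hcand : {H : Set X | H.Finite ∧ H.Nonempty ∧ H ⊆ ⋃ n, (F n).1}.Countable := by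
    apply Set.Countable.mono _ (Set.countable_setOf_finite_subset hCcnt)
    rintro H ⟨h1, h2, h3⟩
    exact ⟨h1, h3⟩
  obtain ⟨hseq, hhseq⟩ := hcand.exists_eq_range
    ⟨(F 0).1, (F 0).2.1, (F 0).2.2, Set.subset_iUnion (fun n => (F n).1) 0⟩
  have hseqFin : ∀ j, (hseq j).Finite := by
    intro j
    have : hseq j ∈ {H : Set X | H.Finite ∧ H.Nonempty ∧ H ⊆ ⋃ n, (F n).1} := by
      rw [hhseq]; exact ⟨j, rfl⟩
    exact this.1
  -- the recursion
  obtain ⟨g, hg0, hgrel⟩ := depChoice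
    (fun j (d d' : {d : PRStage X // d.B.Infinite ∧ IsClosed d.K ∧
        ∀ n ∈ d.B, (U n \ d.K).Nonempty}) =>
      IsOpen d'.1.W ∧ hseq j ⊆ d'.1.W ∧ d.1.a < d'.1.a ∧ d'.1.p ∈ U d'.1.a ∧
      d'.1.p ∉ d.1.K ∧ d'.1.p ∉ d'.1.W ∧ d'.1.p ∈ d'.1.K ∧ d.1.K ⊆ d'.1.K ∧
      d'.1.W ⊆ d'.1.K ∧ d'.1.B ⊆ d.1.B)
    ⟨⟨Set.univ, ∅, 0, x0, ∅⟩, Set.infinite_univ, isClosed_empty, fun n _ => hUne n⟩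
    (by
      intro j d
      obtain ⟨W, K', a, p, B', hWo, hHW, ham, hpU, hpK, hpW, hpK', hKK', hWK', hK'c,
        hB'B, hB'i, hne'⟩ := aux_main h U hUo d.2.2.1 d.2.1 d.2.2.2 (hseqFin j) d.1.a
      exact ⟨⟨⟨B', K', a, p, W⟩, hB'i, hK'c, hne'⟩,
        hWo, hHW, ham, hpU, hpK, hpW, hpK', hKK', hWK', hB'B⟩)
  -- basic facts about the stages
  have haS : StrictMono (fun j => (g (j + 1)).1.a) :=
    strictMono_nat_of_lt_succ fun j => (hgrel (j + 1)).2.2.1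
  have hKmono : ∀ i j, i ≤ j → (g i).1.K ⊆ (g j).1.K := by
    intro i j hij
    induction j with
    | zero =>
        have : i = 0 := Nat.le_zero.mp hij
        rw [this]
    | succ j ih =>
        rcases Nat.lt_or_ge i (j + 1) with hlt | hge
        · exact (ih (Nat.lt_succ_iff.mp hlt)).trans (hgrel j).2.2.2.2.2.2.2.1
        · have : i = j + 1 := le_antisymm hij hge
          rw [this]
  have hpW : ∀ j i, j ≤ i → (g (i + 1)).1.p ∉ (g (j + 1)).1.W := by
    intro j i hji
    rcases eq_or_lt_of_le hji with rfl | hlt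
    · exact (hgrel j).2.2.2.2.2.1
    · intro hmem
      exact (hgrel i).2.2.2.2.1 (hKmono (j + 1) i hlt ((hgrel j).2.2.2.2.2.2.2.2.1 hmem))
  have hpdist : ∀ i j, i < j → (g (i + 1)).1.p ≠ (g (j + 1)).1.p := by
    intro i j hij heq
    have h1 : (g (i + 1)).1.p ∈ (g (i + 1)).1.K := (hgrel i).2.2.2.2.2.2.1
    have h2 : (g (j + 1)).1.p ∉ (g j).1.K := (hgrel j).2.2.2.2.1
    exact h2 (heq ▸ hKmono (i + 1) j hij h1)
  have hpU : ∀ j, (g (j + 1)).1.p ∈ U ((g (j + 1)).1.a) := fun j => (hgrel j).2.2.2.1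
  -- the selection function
  obtain ⟨pick, hpick⟩ : ∃ pick : ℕ → X, ∀ j, pick ((g (j + 1)).1.a) = (g (j + 1)).1.p := by
    refine ⟨fun n => if hn : ∃ i, (g (i + 1)).1.a = n then (g (Classical.choose hn + 1)).1.p
      else x0, fun j => ?_⟩
    have hn : ∃ i, (g (i + 1)).1.a = (g (j + 1)).1.a := ⟨j, rfl⟩
    beta_reduce
    rw [dif_pos hn]
    have : Classical.choose hn = j := haS.injective (Classical.choose_spec hn)
    rw [this]
  refine ⟨Set.range (fun j => (g (j + 1)).1.a),
    Set.infinite_range_of_injective haS.injective,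
    fun n => ⟨insert (pick n) (F n).1, (F n).2.1.insert _, Set.insert_nonempty _ _⟩, ?_, ?_⟩
  · rintro n ⟨j, rfl⟩
    refine hsub _ ⟨Set.subset_insert _ _, ?_⟩
    show insert (pick ((g (j + 1)).1.a)) (F ((g (j + 1)).1.a)).1 ⊆ U ((g (j + 1)).1.a)
    rw [hpick j]
    exact Set.insert_subset (hpU j) (hFU _)
  · intro φ hφ hφA H hconv
    have hjk' : ∀ k, ∃ j, (g (j + 1)).1.a = φ k := fun k => hφA k
    choose jk hjk using hjk'
    have hjkmono : StrictMono jk := by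
      intro k k' hkk'
      apply haS.lt_iff_lt.1
      show (g (jk k + 1)).1.a < (g (jk k' + 1)).1.a
      rw [hjk k, hjk k']
      exact hφ hkk'
    have hGval : ∀ k,
        insert (pick (φ k)) (F (φ k)).1 = insert ((g (jk k + 1)).1.p) (F (φ k)).1 := by
      intro k
      rw [← hjk k, hpick (jk k)]
    have hev1 : ∀ᶠ k in atTop,
        (fun n => (⟨insert (pick n) (F n).1, (F n).2.1.insert _,
          Set.insert_nonempty _ _⟩ : PR X)) (φ k) ∈ PRBasic H.1 Set.univ :=
      hconv ((prBasic_isOpen H isOpen_univ).mem_nhds ⟨Subset.rfl, Set.subset_univ _⟩)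
    obtain ⟨N₁, hN₁⟩ := eventually_atTop.1 hev1
    have hHC : H.1 ⊆ ⋃ n, (F n).1 := by
      intro z hz
      have hz1 : z ∈ insert (pick (φ N₁)) (F (φ N₁)).1 := (hN₁ N₁ le_rfl).1 hz
      have hz2 : z ∈ insert (pick (φ (N₁ + 1))) (F (φ (N₁ + 1))).1 :=
        (hN₁ (N₁ + 1) (Nat.le_succ _)).1 hz
      rw [hGval N₁] at hz1
      rw [hGval (N₁ + 1)] at hz2
      rcases hz1 with h1 | h1
      · rcases hz2 with h2 | h2
        · exact absurd (h1.symm.trans h2 : _ = _)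
            (hpdist _ _ (hjkmono (Nat.lt_succ_self N₁)))
        · exact Set.mem_iUnion.2 ⟨φ (N₁ + 1), h2⟩
      · exact Set.mem_iUnion.2 ⟨φ N₁, h1⟩
    have hHmem : H.1 ∈ {H : Set X | H.Finite ∧ H.Nonempty ∧ H ⊆ ⋃ n, (F n).1} :=
      ⟨H.2.1, H.2.2, hHC⟩
    rw [hhseq] at hHmem
    obtain ⟨j0, hj0⟩ := hHmem
    have hWo : IsOpen ((g (j0 + 1)).1.W) := (hgrel j0).1
    have hHW : H.1 ⊆ (g (j0 + 1)).1.W := hj0 ▸ (hgrel j0).2.1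
    have hev2 : ∀ᶠ k in atTop,
        (fun n => (⟨insert (pick n) (F n).1, (F n).2.1.insert _,
          Set.insert_nonempty _ _⟩ : PR X)) (φ k) ∈ PRBasic H.1 ((g (j0 + 1)).1.W) :=
      hconv ((prBasic_isOpen H hWo).mem_nhds ⟨Subset.rfl, hHW⟩)
    obtain ⟨N₂, hN₂⟩ := eventually_atTop.1 hev2
    have hk1 : insert (pick (φ (max N₂ j0))) (F (φ (max N₂ j0))).1 ⊆ (g (j0 + 1)).1.W :=
      (hN₂ _ (le_max_left _ _)).2
    rw [hGval (max N₂ j0)] at hk1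
    have hk3 : j0 ≤ jk (max N₂ j0) := le_trans (le_max_right _ _) hjkmono.le_apply
    exact hpW j0 _ hk3 (hk1 (Set.mem_insert _ _))
end

section
/- Let X be a regular P-space and let x ∈ X. Then the following statements are equivalent: (1) X has a countable local base at x; (2) there exists a sequence of nonempty open subsets of X converging to x; (3) X has a countable local π-base at x. -/
open Filter Topology Set

/-!
Regularity turns a local π-base `V` at `x` into the family of closures `closure V`, every open
neighbourhood of `x` containing one of them. In a P-space a countable such family has a member
contained in *every* open neighbourhood of `x`: otherwise choose, for each member, a neighbourhood
omitting it, and their intersection is an open neighbourhood containing no member. So some nonempty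
open `V` lies in all neighbourhoods of `x`; its points specialize to `x`, and since specialization is
symmetric in a regular space, `x ∈ V`. Thus `x` has a smallest open neighbourhood, which is by
itself a local base and, as a constant sequence, converges to `x`.
-/

section

variable {X : Type*} [TopologicalSpace X]

theorem PSpace.isOpen_iInter {ι : Sort*} [Countable ι] (hP : PSpace X) {U : ι → Set X}
    (hU : ∀ i, IsOpen (U i)) : IsOpen (⋂ i, U i) := by
  cases isEmpty_or_nonempty ι
  · simp
  · obtain ⟨f, hf⟩ := exists_surjective_nat ι
    rw [← hf.iInter_comp]
    exact hP _ fun n => hU (f n)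

theorem PSpace.exists_subset_forall_open_nhd {ι : Sort*} [Countable ι] (hP : PSpace X) {x : X}
    {C : ι → Set X} (hC : ∀ U, IsOpen U → x ∈ U → ∃ i, C i ⊆ U) :
    ∃ i, ∀ U, IsOpen U → x ∈ U → C i ⊆ U := by
  by_contra! h
  choose Z hZo hxZ hCZ using h
  obtain ⟨i, hi⟩ := hC (⋂ i, Z i) (hP.isOpen_iInter hZo) (mem_iInter.2 hxZ)
  exact hCZ i (hi.trans (iInter_subset Z i))

theorem exists_closure_subset_of_forall_open_nhd [RegularSpace X] {ι : Sort*} {x : X}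
    {V : ι → Set X} (hV : ∀ U, IsOpen U → x ∈ U → ∃ i, V i ⊆ U) {U : Set X} (hU : IsOpen U)
    (hxU : x ∈ U) : ∃ i, closure (V i) ⊆ U := by
  obtain ⟨C, hC, hCc, hCU⟩ := exists_mem_nhds_isClosed_subset (hU.mem_nhds hxU)
  obtain ⟨i, hi⟩ := hV (interior C) isOpen_interior (mem_interior_iff_mem_nhds.2 hC)
  exact ⟨i, (closure_minimal (hi.trans interior_subset) hCc).trans hCU⟩

theorem mem_of_subset_forall_open_nhd [R0Space X] {x : X} {V : Set X} (hV : IsOpen V)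
    (hne : V.Nonempty) (hVx : ∀ U, IsOpen U → x ∈ U → V ⊆ U) : x ∈ V := by
  obtain ⟨y, hy⟩ := hne
  have hyx : y ⤳ x := specializes_iff_forall_open.2 fun U hU hxU => hVx U hU hxU hy
  exact hyx.symm.mem_open hV hy

theorem PSpace.exists_minimal_open_nhd [RegularSpace X] (hP : PSpace X) {x : X}
    (h : HasCountableLocalPiBase x) :
    ∃ V, IsOpen V ∧ x ∈ V ∧ ∀ U, IsOpen U → x ∈ U → V ⊆ U := by
  obtain ⟨B, hBc, hBo, hB⟩ := h
  have := hBc.to_subtype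
  have hB' : ∀ U, IsOpen U → x ∈ U → ∃ V : B, (V : Set X) ⊆ U := fun U hU hxU =>
    let ⟨V, hV, hVU⟩ := hB U hU hxU
    ⟨⟨V, hV⟩, hVU⟩
  obtain ⟨⟨V, hV⟩, hVx⟩ := hP.exists_subset_forall_open_nhd (C := fun V : B => closure V)
    fun U hU hxU => exists_closure_subset_of_forall_open_nhd hB' hU hxU
  have hVx' : ∀ U, IsOpen U → x ∈ U → V ⊆ U := fun U hU hxU =>
    subset_closure.trans (hVx U hU hxU)
  exact ⟨V, (hBo V hV).1, mem_of_subset_forall_open_nhd (hBo V hV).1 (hBo V hV).2 hVx', hVx'⟩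

theorem HasCountableLocalBase.hasCountableLocalPiBase {x : X} (h : HasCountableLocalBase x) :
    HasCountableLocalPiBase x :=
  let ⟨B, hBc, hBo, hB⟩ := h
  ⟨B, hBc, fun V hV => ⟨(hBo V hV).1, x, (hBo V hV).2⟩, hB⟩

theorem hasCountableLocalPiBase_of_openSeqTendsto {U : ℕ → Set X} {x : X}
    (hUo : ∀ n, IsOpen (U n)) (hne : ∀ n, (U n).Nonempty) (hU : OpenSeqTendsto U x) :
    HasCountableLocalPiBase x := by
  refine ⟨range U, countable_range U, forall_mem_range.2 fun n => ⟨hUo n, hne n⟩, ?_⟩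
  intro W hW hxW
  obtain ⟨m, hm⟩ := hU W hW hxW
  exact ⟨U m, mem_range_self m, hm m le_rfl⟩

end

theorem statement15 {X : Type*} [TopologicalSpace X] [RegularSpace X] (hP : PSpace X) (x : X) :
    List.TFAE [
      HasCountableLocalBase x,
      ∃ U : ℕ → Set X, (∀ n, IsOpen (U n)) ∧ (∀ n, (U n).Nonempty) ∧ OpenSeqTendsto U x,
      HasCountableLocalPiBase x] := by
  tfae_have 1 → 3 := HasCountableLocalBase.hasCountableLocalPiBase
  tfae_have 2 → 3 := fun ⟨U, hUo, hne, hU⟩ => hasCountableLocalPiBase_of_openSeqTendsto hUo hne hU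
  tfae_have 3 → 1 := fun h => by
    obtain ⟨V, hV, hxV, hVmin⟩ := hP.exists_minimal_open_nhd h
    exact ⟨{V}, countable_singleton V, by simp [hV, hxV], fun U hU hxU => ⟨V, rfl, hVmin U hU hxU⟩⟩
  tfae_have 3 → 2 := fun h => by
    obtain ⟨V, hV, hxV, hVmin⟩ := hP.exists_minimal_open_nhd h
    exact ⟨fun _ => V, fun _ => hV, fun _ => ⟨x, hxV⟩, fun U hU hxU => ⟨0, fun _ _ => hVmin U hU hxU⟩⟩
  tfae_finish
end

section
/- Let G be a topological group with identity element e and let x ∈ G. Then the following statements are equivalent: (1) G has a countable local base at e; (2) G has a countable local base at x; (3) there exists a sequence of nonempty open subsets of G converging to x; (4) G has a countable local π-base at x; (5) G has a countable local π-base at e. -/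
open Filter Topology Set

open scoped Pointwise

lemma base_homeo {X Y : Type*} [TopologicalSpace X] [TopologicalSpace Y]
    (h : X ≃ₜ Y) (x : X) : HasCountableLocalBase x → HasCountableLocalBase (h x) := by
  rintro ⟨B, hc, hB, hbase⟩
  refine ⟨(fun V => h '' V) '' B, hc.image _, ?_, ?_⟩
  · rintro _ ⟨V, hV, rfl⟩
    exact ⟨h.isOpen_image.2 (hB V hV).1, Set.mem_image_of_mem _ (hB V hV).2⟩
  · intro U hU hxU
    obtain ⟨V, hV, hsub⟩ := hbase (h ⁻¹' U) (hU.preimage h.continuous) hxU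
    exact ⟨h '' V, Set.mem_image_of_mem _ hV, Set.image_subset_iff.2 hsub⟩

lemma pibase_homeo {X Y : Type*} [TopologicalSpace X] [TopologicalSpace Y]
    (h : X ≃ₜ Y) (x : X) : HasCountableLocalPiBase x → HasCountableLocalPiBase (h x) := by
  rintro ⟨B, hc, hB, hbase⟩
  refine ⟨(fun V => h '' V) '' B, hc.image _, ?_, ?_⟩
  · rintro _ ⟨V, hV, rfl⟩
    exact ⟨h.isOpen_image.2 (hB V hV).1, (hB V hV).2.image _⟩
  · intro U hU hxU
    obtain ⟨V, hV, hsub⟩ := hbase (h ⁻¹' U) (hU.preimage h.continuous) hxU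
    exact ⟨h '' V, Set.mem_image_of_mem _ hV, Set.image_subset_iff.2 hsub⟩

theorem statement17 {G : Type*} [Group G] [TopologicalSpace G] [IsTopologicalGroup G] (x : G) :
    List.TFAE [
      HasCountableLocalBase (1 : G),
      HasCountableLocalBase x,
      ∃ U : ℕ → Set G, (∀ n, IsOpen (U n)) ∧ (∀ n, (U n).Nonempty) ∧ OpenSeqTendsto U x,
      HasCountableLocalPiBase x,
      HasCountableLocalPiBase (1 : G)] := by
  tfae_have 1 → 2 := by
    intro h1
    simpa using base_homeo (Homeomorph.mulRight x) 1 h1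
  tfae_have 2 → 3 := by
    rintro ⟨B, hc, hB, hbase⟩
    have hne : B.Nonempty := by
      obtain ⟨V, hV, -⟩ := hbase Set.univ isOpen_univ (Set.mem_univ x)
      exact ⟨V, hV⟩
    obtain ⟨f, hf⟩ := (Set.countable_iff_exists_surjective hne).1 hc
    refine ⟨fun n => ⋂ k ∈ Finset.range (n+1), (f k : Set G), ?_, ?_, ?_⟩
    · intro n
      exact isOpen_biInter_finset fun k _ => (hB _ (f k).2).1
    · intro n
      exact ⟨x, Set.mem_iInter₂.2 fun k _ => (hB _ (f k).2).2⟩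
    · intro V hV hxV
      obtain ⟨W, hW, hsub⟩ := hbase V hV hxV
      obtain ⟨m, hm⟩ := hf ⟨W, hW⟩
      refine ⟨m, fun n hn => ?_⟩
      refine Set.Subset.trans ?_ hsub
      intro y hy
      have := Set.mem_iInter₂.1 hy m (Finset.mem_range.2 (Nat.lt_succ_of_le hn))
      rwa [hm] at this
  tfae_have 3 → 4 := by
    rintro ⟨U, hopen, hne, htend⟩
    refine ⟨Set.range U, Set.countable_range U, ?_, ?_⟩
    · rintro _ ⟨n, rfl⟩; exact ⟨hopen n, hne n⟩
    · intro V hV hxV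
      obtain ⟨m, hm⟩ := htend V hV hxV
      exact ⟨U m, Set.mem_range_self m, hm m le_rfl⟩
  tfae_have 4 → 5 := by
    intro h4
    simpa using pibase_homeo (Homeomorph.mulRight x⁻¹) x h4
  tfae_have 5 → 1 := by
    rintro ⟨B, hc, hB, hbase⟩
    refine ⟨(fun V => V⁻¹ * V) '' B, hc.image _, ?_, ?_⟩
    · rintro _ ⟨V, hV, rfl⟩
      obtain ⟨a, ha⟩ := (hB V hV).2
      refine ⟨(hB V hV).1.mul_left, ?_⟩
      have := Set.mul_mem_mul (Set.inv_mem_inv.2 ha) ha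
      rwa [inv_mul_cancel] at this
    · intro U hU h1U
      obtain ⟨W, hW1, hWo, hWU⟩ : ∃ W : Set G, (1:G) ∈ W ∧ IsOpen W ∧ W⁻¹ * W ⊆ U := by
        have : ContinuousAt (fun p : G × G => p.1⁻¹ * p.2) (1, 1) := by
          fun_prop
        have h' := this (hU.mem_nhds (by simpa using h1U))
        rw [Filter.mem_map, nhds_prod_eq, Filter.mem_prod_iff] at h'
        obtain ⟨s, hs, t, ht, hst⟩ := h'
        obtain ⟨s', hs's, hs'o, hs'1⟩ := mem_nhds_iff.1 hs
        obtain ⟨t', ht't, ht'o, ht'1⟩ := mem_nhds_iff.1 ht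
        refine ⟨s' ∩ t', ⟨hs'1, ht'1⟩, hs'o.inter ht'o, ?_⟩
        intro y hy
        rw [Set.mem_mul] at hy
        obtain ⟨a, ha, b, hb, rfl⟩ := hy
        have ha' : a⁻¹ ∈ s' ∩ t' := Set.mem_inv.1 ha
        have hmem : (a⁻¹, b) ∈ s ×ˢ t := ⟨hs's ha'.1, ht't hb.2⟩
        have := hst hmem
        simpa using this
      obtain ⟨V, hV, hVW⟩ := hbase W hWo hW1
      refine ⟨V⁻¹ * V, Set.mem_image_of_mem _ hV, ?_⟩
      calc V⁻¹ * V ⊆ W⁻¹ * W := Set.mul_subset_mul (Set.inv_subset_inv.2 hVW) hVW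
        _ ⊆ U := hWU
  tfae_finish
end
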